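/- arXiv:math/0311495 — 8 statements merged into one kernel-verified Lean document; each statement's English description precedes it below -/
import Mathlib

section
/- Let P and Q be orthogonal projections on a real Hilbert space H (bounded selfadjoint idempotents) with ‖P − Q‖ < 1. Then there exists a bijective isometric (orthogonal) operator W : H → H such that W ∘ Q = P ∘ W; in particular W maps the range of Q onto the range of P, so the ranges of P and Q are unitarily equivalent. -/
/-!
Following Kato: `d = (P - Q)²` commutes with `P` and `Q`, and `V = P Q + (1 - P)(1 - Q)` satisfies
`V Q = P V` and `V* V = V V* = 1 - d`. As `‖d‖ < 1`, the self-adjoint square root `S` of `1 - d`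
is invertible and commutes with `V`, so `U = V S⁻¹` is orthogonal with `U Q = P U`.
The square root is the power series `S = 1 - (d / 2) C(d / 4)`, where `C(x) = ∑ Cₙ xⁿ` is the
Catalan generating function: `C = 1 + x C²` gives `S² = 1 - d`, and `C` converges for
`‖x‖ ≤ 1 / 4` because `∑ Cₙ / 4ⁿ ≤ 2`.
-/

open scoped RealInnerProductSpace
open Finset

lemma sum_range_sum_antidiagonal_mul_le_sq {a : ℕ → ℝ} (ha : ∀ n, 0 ≤ a n) (N : ℕ) :
    ∑ n ∈ range N, ∑ ij ∈ antidiagonal n, a ij.1 * a ij.2 ≤ (∑ n ∈ range N, a n) ^ 2 := by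
  simp only [Nat.sum_antidiagonal_eq_sum_range_succ_mk, Nat.succ_eq_add_one]
  rw [sum_range_diag_flip N fun i j => a i * a j, sq, sum_mul_sum]
  exact sum_le_sum fun i _ => sum_le_sum_of_subset_of_nonneg
    (range_subset_range.2 (Nat.sub_le N i)) fun j _ _ => mul_nonneg (ha i) (ha j)

lemma catalan_succ_div_four_pow (n : ℕ) :
    (catalan (n + 1) : ℝ) / 4 ^ (n + 1) =
      (∑ ij ∈ antidiagonal n, ((catalan ij.1 : ℝ) / 4 ^ ij.1) * (catalan ij.2 / 4 ^ ij.2)) / 4 := by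
  rw [catalan_succ', Nat.cast_sum, sum_div, sum_div]
  refine sum_congr rfl fun ij hij => ?_
  rw [← mem_antidiagonal.1 hij]
  push_cast
  field_simp
  ring

lemma sum_range_catalan_div_four_pow_le_two (N : ℕ) :
    ∑ n ∈ range N, (catalan n : ℝ) / 4 ^ n ≤ 2 := by
  induction N with
  | zero => norm_num
  | succ N ih =>
    have hsq := sum_range_sum_antidiagonal_mul_le_sq (a := fun n => (catalan n : ℝ) / 4 ^ n)
      (fun n => by positivity) N
    have h0 : 0 ≤ ∑ n ∈ range N, (catalan n : ℝ) / 4 ^ n := by positivity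
    -- the partial sums satisfy `T (N + 1) ≤ 1 + T N ^ 2 / 4`
    rw [sum_range_succ', catalan_zero]
    simp only [catalan_succ_div_four_pow, ← sum_div] at *
    nlinarith

lemma summable_catalan_div_four_pow : Summable fun n => (catalan n : ℝ) / 4 ^ n :=
  summable_of_sum_range_le (fun n => by positivity) sum_range_catalan_div_four_pow_le_two

section CatalanTsum

variable {A : Type*} [NormedRing A]

noncomputable def catalanTsum (x : A) : A := ∑' n, catalan n • x ^ n

lemma summable_norm_catalan_nsmul_pow {x : A} (hx : ‖x‖ ≤ 1 / 4) :
    Summable fun n => ‖catalan n • x ^ n‖ := by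
  refine (summable_nat_add_iff 1).1 <| Summable.of_nonneg_of_le (fun _ => norm_nonneg _)
    (fun n => ?_) ((summable_nat_add_iff 1).2 summable_catalan_div_four_pow)
  calc ‖catalan (n + 1) • x ^ (n + 1)‖ ≤ catalan (n + 1) * ‖x‖ ^ (n + 1) :=
        norm_nsmul_le.trans (by gcongr; exact norm_pow_le' x n.succ_pos)
    _ ≤ catalan (n + 1) * (1 / 4) ^ (n + 1) := by gcongr
    _ = catalan (n + 1) / 4 ^ (n + 1) := by rw [one_div_pow, mul_one_div]

lemma catalanTsum_eq [CompleteSpace A] {x : A} (hx : ‖x‖ ≤ 1 / 4) :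
    catalanTsum x = 1 + x * catalanTsum x ^ 2 := by
  have hsum := summable_norm_catalan_nsmul_pow hx
  have hconv (n : ℕ) :
      ∑ ij ∈ antidiagonal n, catalan ij.1 • x ^ ij.1 * catalan ij.2 • x ^ ij.2 =
        catalan (n + 1) • x ^ n := by
    rw [catalan_succ', sum_smul]
    refine sum_congr rfl fun ij hij => ?_
    rw [smul_mul_smul_comm, ← pow_add, mem_antidiagonal.1 hij]
  have hsum' : Summable fun n => catalan (n + 1) • x ^ n := by
    simpa only [hconv] using (summable_norm_sum_mul_antidiagonal_of_summable_norm hsum hsum).of_norm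
  have hsq : catalanTsum x ^ 2 = ∑' n, catalan (n + 1) • x ^ n := by
    rw [sq, catalanTsum, tsum_mul_tsum_eq_tsum_sum_antidiagonal_of_summable_norm hsum hsum]
    exact tsum_congr hconv
  rw [hsq, ← hsum'.tsum_mul_left, catalanTsum, hsum.of_norm.tsum_eq_zero_add]
  simp only [catalan_zero, pow_zero, one_smul, pow_succ', mul_smul_comm]

lemma Commute.catalanTsum_left {x y : A} (h : Commute x y) : Commute (catalanTsum x) y :=
  Commute.tsum_left y fun n => (h.pow_left n).smul_left _

lemma IsSelfAdjoint.catalanTsum [StarRing A] [ContinuousStar A] {x : A} (hx : IsSelfAdjoint x) :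
    IsSelfAdjoint (catalanTsum x) := by
  simp only [IsSelfAdjoint, _root_.catalanTsum, tsum_star, star_nsmul, star_pow, hx.star_eq]

end CatalanTsum

section SqrtOneSub

variable {A : Type*} [NormedRing A] [NormedAlgebra ℝ A]

noncomputable def sqrtOneSub (a : A) : A := 1 - (2⁻¹ : ℝ) • (a * catalanTsum ((4⁻¹ : ℝ) • a))

lemma commute_self_catalanTsum_smul (r : ℝ) (a : A) : Commute a (catalanTsum (r • a)) :=
  ((Commute.refl a).smul_left r).catalanTsum_left.symm

lemma Commute.sqrtOneSub_left {a b : A} (h : Commute a b) : Commute (sqrtOneSub a) b :=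
  (Commute.one_left b).sub_left ((h.mul_left (h.smul_left _).catalanTsum_left).smul_left _)

lemma sqrtOneSub_mul_self [CompleteSpace A] {a : A} (ha : ‖a‖ ≤ 1) :
    sqrtOneSub a * sqrtOneSub a = 1 - a := by
  set B := catalanTsum ((4⁻¹ : ℝ) • a)
  have hB : a * B ^ 2 = (4 : ℝ) • (B - 1) := by
    have h : (4⁻¹ : ℝ) • a * B ^ 2 = B - 1 := by
      rw [eq_sub_iff_add_eq']
      exact (catalanTsum_eq (by rw [norm_smul]; norm_num; linarith)).symm
    rw [← h, smul_mul_assoc, smul_smul]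
    norm_num
  have hcomm : Commute a B := commute_self_catalanTsum_smul _ a
  calc sqrtOneSub a * sqrtOneSub a
      = 1 - a * B + (4⁻¹ : ℝ) • (a * (a * B ^ 2)) := by
        simp only [sqrtOneSub, sub_mul, mul_sub, one_mul, mul_one, smul_mul_smul_comm,
          mul_assoc, hcomm.left_comm B, sq]
        module
    _ = 1 - a := by
        rw [hB, mul_smul_comm, smul_smul]
        norm_num
        noncomm_ring

lemma IsSelfAdjoint.sqrtOneSub [StarRing A] [StarModule ℝ A] [ContinuousStar A] {a : A}
    (ha : IsSelfAdjoint a) : IsSelfAdjoint (sqrtOneSub a) := by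
  have hB := ((IsSelfAdjoint.all (4⁻¹ : ℝ)).smul ha).catalanTsum
  have haB := (ha.commute_iff hB).mp (commute_self_catalanTsum_smul _ a)
  exact (IsSelfAdjoint.one A).sub ((IsSelfAdjoint.all _).smul haB)

end SqrtOneSub

lemma mul_inv_mem_unitary_of_star_mul_self_eq {R : Type*} [Monoid R] [StarMul R] {v : R}
    {s : Rˣ} (hs : IsSelfAdjoint (s : R)) (hsv : Commute (s : R) v)
    (h₁ : star v * v = s * s) (h₂ : v * star v = s * s) : v * ↑s⁻¹ ∈ unitary R := by
  have hs' : star (↑s⁻¹ : R) = ↑s⁻¹ := by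
    rw [← Units.coe_star_inv, show star s = s from Units.ext hs.star_eq]
  have hsv' : Commute (↑s⁻¹ : R) (star v) := by
    refine Commute.units_inv_left ?_
    simpa only [hs.star_eq] using hsv.star_star
  rw [Unitary.mem_iff, star_mul, hs']
  constructor
  · calc ↑s⁻¹ * star v * (v * ↑s⁻¹) = ↑s⁻¹ * (star v * v) * ↑s⁻¹ := by simp only [mul_assoc]
      _ = 1 := by simp [h₁]
  · calc v * ↑s⁻¹ * (↑s⁻¹ * star v) = v * (↑s⁻¹ * ↑s⁻¹ * star v) := by simp only [mul_assoc]
      _ = v * star v * (↑s⁻¹ * ↑s⁻¹) := by rw [(hsv'.mul_left hsv').eq, mul_assoc]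
      _ = 1 := by simp [h₂, mul_assoc]

section Projections

variable {R : Type*} [Ring R] {p q : R}

lemma IsIdempotentElem.commute_sub_sq_left (hp : IsIdempotentElem p)
    (hq : IsIdempotentElem q) : Commute ((p - q) ^ 2) p := by
  have hpp (y : R) : p * (p * y) = p * y := by rw [← mul_assoc, hp.eq]
  simp only [Commute, SemiconjBy, sq, mul_sub, sub_mul, mul_assoc, hp.eq, hq.eq, hpp]
  abel

lemma IsIdempotentElem.commute_sub_sq_right (hp : IsIdempotentElem p)
    (hq : IsIdempotentElem q) : Commute ((p - q) ^ 2) q := by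
  simpa only [← neg_sub p q, neg_sq] using hq.commute_sub_sq_left hp

lemma IsIdempotentElem.mul_add_one_sub_mul_one_sub_mul_right (hp : IsIdempotentElem p)
    (hq : IsIdempotentElem q) :
    (p * q + (1 - p) * (1 - q)) * q = p * (p * q + (1 - p) * (1 - q)) := by
  have hpp (y : R) : p * (p * y) = p * y := by rw [← mul_assoc, hp.eq]
  simp only [mul_add, add_mul, mul_sub, sub_mul, mul_one, one_mul, mul_assoc, hp.eq, hq.eq, hpp]
  abel

variable [StarRing R]

lemma IsStarProjection.star_mul_add_one_sub_mul_one_sub (hp : IsStarProjection p)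
    (hq : IsStarProjection q) :
    star (p * q + (1 - p) * (1 - q)) = q * p + (1 - q) * (1 - p) := by
  simp only [star_add, star_mul, star_sub, star_one, hp.isSelfAdjoint.star_eq,
    hq.isSelfAdjoint.star_eq]

lemma IsStarProjection.star_mul_self_mul_add_one_sub_mul_one_sub (hp : IsStarProjection p)
    (hq : IsStarProjection q) :
    star (p * q + (1 - p) * (1 - q)) * (p * q + (1 - p) * (1 - q)) = 1 - (p - q) ^ 2 := by
  have hpp (y : R) : p * (p * y) = p * y := by rw [← mul_assoc, hp.isIdempotentElem.eq]
  rw [hp.star_mul_add_one_sub_mul_one_sub hq]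
  simp only [sq, mul_add, add_mul, mul_sub, sub_mul, mul_one, one_mul, mul_assoc,
    hp.isIdempotentElem.eq, hq.isIdempotentElem.eq, hpp]
  abel

lemma IsStarProjection.mul_add_one_sub_mul_one_sub_mul_star (hp : IsStarProjection p)
    (hq : IsStarProjection q) :
    (p * q + (1 - p) * (1 - q)) * star (p * q + (1 - p) * (1 - q)) = 1 - (p - q) ^ 2 := by
  have h := hq.star_mul_self_mul_add_one_sub_mul_one_sub hp
  rwa [← hp.star_mul_add_one_sub_mul_one_sub hq, star_star, ← neg_sub p q, neg_sq] at h

end Projections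

theorem IsStarProjection.exists_mem_unitary_mul_eq_mul_of_norm_sub_lt_one {A : Type*}
    [NormedRing A] [NormedAlgebra ℝ A] [CompleteSpace A] [StarRing A] [StarModule ℝ A]
    [ContinuousStar A] {p q : A} (hp : IsStarProjection p) (hq : IsStarProjection q)
    (hpq : ‖p - q‖ < 1) : ∃ u ∈ unitary A, u * q = p * u := by
  set d := (p - q) ^ 2
  set v := p * q + (1 - p) * (1 - q)
  have hd : ‖d‖ < 1 :=
    (norm_pow_le' _ two_pos).trans_lt (pow_lt_one₀ (norm_nonneg _) hpq two_ne_zero)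
  obtain ⟨s, hs⟩ : IsUnit (sqrtOneSub d) := by
    have h : IsUnit (sqrtOneSub d * sqrtOneSub d) := by
      rw [sqrtOneSub_mul_self hd.le]
      exact (Units.oneSub d hd).isUnit
    exact ((Commute.refl _).isUnit_mul_iff.mp h).1
  have hss : (s : A) * s = 1 - d := hs ▸ sqrtOneSub_mul_self hd.le
  have hsp : Commute (s : A) p :=
    hs ▸ (hp.isIdempotentElem.commute_sub_sq_left hq.isIdempotentElem).sqrtOneSub_left
  have hsq : Commute (s : A) q :=
    hs ▸ (hp.isIdempotentElem.commute_sub_sq_right hq.isIdempotentElem).sqrtOneSub_left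
  have hsv : Commute (s : A) v := (hsp.mul_right hsq).add_right
    (((Commute.one_right _).sub_right hsp).mul_right ((Commute.one_right _).sub_right hsq))
  refine ⟨v * ↑s⁻¹, mul_inv_mem_unitary_of_star_mul_self_eq ?_ hsv
    (hss ▸ hp.star_mul_self_mul_add_one_sub_mul_one_sub hq)
    (hss ▸ hp.mul_add_one_sub_mul_one_sub_mul_star hq), ?_⟩
  · exact hs ▸ ((hp.isSelfAdjoint.sub hq.isSelfAdjoint).pow 2).sqrtOneSub
  · rw [mul_assoc, hsq.units_inv_left.eq, ← mul_assoc,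
      hp.isIdempotentElem.mul_add_one_sub_mul_one_sub_mul_right hq.isIdempotentElem, mul_assoc]

/-- Two orthogonal projections at distance `< 1` have unitarily equivalent ranges:
there is an orthogonal (bijective isometric) operator `W` with `W ∘ Q = P ∘ W`,
so `W` maps the range of `Q` onto the range of `P`. -/
theorem projections_close_imp_unitarily_equivalent
    {H : Type*} [NormedAddCommGroup H] [InnerProductSpace ℝ H] [CompleteSpace H]
    (P Q : H →L[ℝ] H)
    (hPsa : ∀ x y : H, ⟪P x, y⟫ = ⟪x, P y⟫) (hPidem : P.comp P = P)
    (hQsa : ∀ x y : H, ⟪Q x, y⟫ = ⟪x, Q y⟫) (hQidem : Q.comp Q = Q)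
    (hnorm : ‖P - Q‖ < 1) :
    ∃ W : H ≃ₗᵢ[ℝ] H, (∀ x : H, W (Q x) = P (W x)) ∧
      ⇑W '' Set.range ⇑Q = Set.range ⇑P := by
  have hP : IsStarProjection P := ⟨hPidem, ContinuousLinearMap.isSelfAdjoint_iff_isSymmetric.2 hPsa⟩
  have hQ : IsStarProjection Q := ⟨hQidem, ContinuousLinearMap.isSelfAdjoint_iff_isSymmetric.2 hQsa⟩
  obtain ⟨u, hu, huQ⟩ := hP.exists_mem_unitary_mul_eq_mul_of_norm_sub_lt_one hQ hnorm
  set W := Unitary.linearIsometryEquiv ⟨u, hu⟩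
  have hWQ (x : H) : W (Q x) = P (W x) := congr($huQ x)
  refine ⟨W, hWQ, ?_⟩
  rw [← Set.range_comp, ← W.surjective.range_comp P]
  exact congrArg Set.range (funext hWQ)
end

section
/- Let μ and ν be Lagrangian subspaces of H. Then μ + ν = H if and only if the operator P_μ + P_ν : H → H is bijective (a continuous linear isomorphism). -/
/-!
`P` and `Q` are the orthogonal projections onto `μ` and `ν`. Since
`⟪(P + Q) x, x⟫ = ‖P x‖² + ‖Q x‖²`, the kernel of `P + Q` is `μᗮ ⊓ νᗮ = (μ ⊔ ν)ᗮ`.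
For surjectivity, write `m ∈ μ` as `u + w` with `u ∈ μᗮ`, `w ∈ νᗮ`; then
`(P + Q) w = P (u + w) = m`. Such decompositions exist because a Lagrangian subspace
satisfies `J μ ⊆ μᗮ`, so that `H = J (μ ⊔ ν) ⊆ μᗮ ⊔ νᗮ`.
-/

open scoped RealInnerProductSpace

/-- The annihilator of a set `μ` with respect to the symplectic form `ω(x, y) = ⟪J x, y⟫`. -/
def omegaAnn {H : Type*} [NormedAddCommGroup H] [InnerProductSpace ℝ H]
    (J : H →L[ℝ] H) (μ : Set H) : Set H :=
  {x : H | ∀ y ∈ μ, ⟪J x, y⟫ = 0}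

theorem ContinuousLinearMap.exists_eq_starProjection_of_isSymmetricProjection
    {𝕜 E : Type*} [RCLike 𝕜] [NormedAddCommGroup E] [InnerProductSpace 𝕜 E]
    {P : E →L[𝕜] E} {K : Submodule 𝕜 E}
    (hP : (P : E →ₗ[𝕜] E).IsSymmetricProjection)
    (hK : LinearMap.range (P : E →ₗ[𝕜] E) = K) :
    ∃ _ : K.HasOrthogonalProjection, P = K.starProjection := by
  subst hK
  obtain ⟨_, h⟩ := LinearMap.isSymmetricProjection_iff_eq_coe_starProjection_range.mp hP
  exact ⟨_, ContinuousLinearMap.coe_injective h⟩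

namespace Submodule

variable {𝕜 E : Type*} [RCLike 𝕜] [NormedAddCommGroup E] [InnerProductSpace 𝕜 E]
  (K L : Submodule 𝕜 E) [K.HasOrthogonalProjection] [L.HasOrthogonalProjection]

theorem starProjection_add_injective (h : K ⊔ L = ⊤) :
    Function.Injective (K.starProjection + L.starProjection) := by
  rw [injective_iff_map_eq_zero]
  intro v hv
  have hsum :
      ‖K.orthogonalProjectionOnto v‖ ^ 2 + ‖L.orthogonalProjectionOnto v‖ ^ 2 = 0 := by
    rw [← re_inner_starProjection_eq_normSq, ← re_inner_starProjection_eq_normSq, ← map_add,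
      ← inner_add_left, ← add_apply, hv, inner_zero_left, map_zero]
  rw [add_eq_zero_iff_of_nonneg (sq_nonneg _) (sq_nonneg _)] at hsum
  have hK : v ∈ Kᗮ := K.starProjection_apply_eq_zero_iff.mp <| by simpa using hsum.1
  have hL : v ∈ Lᗮ := L.starProjection_apply_eq_zero_iff.mp <| by simpa using hsum.2
  have hv : v ∈ (K ⊔ L)ᗮ := inf_orthogonal K L ▸ ⟨hK, hL⟩
  rwa [h, top_orthogonal_eq_bot, mem_bot] at hv

theorem le_range_starProjection_add (h : Kᗮ ⊔ Lᗮ = ⊤) :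
    K ≤ (K.starProjection + L.starProjection).range := by
  intro m hm
  obtain ⟨u, hu, w, hw, rfl⟩ := mem_sup.mp (h ▸ mem_top : m ∈ Kᗮ ⊔ Lᗮ)
  refine ⟨w, ?_⟩
  have hKu : K.starProjection u = 0 := K.starProjection_apply_eq_zero_iff.mpr hu
  have hLw : L.starProjection w = 0 := L.starProjection_apply_eq_zero_iff.mpr hw
  calc (K.starProjection + L.starProjection) w = K.starProjection (u + w) := by
        simp [hKu, hLw]
    _ = u + w := starProjection_eq_self_iff.mpr hm

theorem starProjection_add_bijective (h : K ⊔ L = ⊤) (h' : Kᗮ ⊔ Lᗮ = ⊤) :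
    Function.Bijective (K.starProjection + L.starProjection) := by
  refine ⟨K.starProjection_add_injective L h, LinearMap.range_eq_top.mp (eq_top_iff.mpr ?_)⟩
  rw [← h]
  refine sup_le (K.le_range_starProjection_add L h') ?_
  rw [add_comm]
  exact L.le_range_starProjection_add K (sup_comm Kᗮ Lᗮ ▸ h')

end Submodule

section Symplectic

variable {H : Type*} [NormedAddCommGroup H] [InnerProductSpace ℝ H] {J : H →L[ℝ] H}

theorem map_le_orthogonal_of_subset_omegaAnn {L : Submodule ℝ H}
    (hL : (L : Set H) ⊆ omegaAnn J L) : L.map (J : H →ₗ[ℝ] H) ≤ Lᗮ := by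
  rintro _ ⟨m, hm, rfl⟩
  exact (Submodule.mem_orthogonal' _ _).mpr (hL hm)

theorem orthogonal_sup_orthogonal_eq_top_of_subset_omegaAnn (hJ : Function.Surjective J)
    {μ ν : Submodule ℝ H} (hμ : (μ : Set H) ⊆ omegaAnn J μ)
    (hν : (ν : Set H) ⊆ omegaAnn J ν) (h : μ ⊔ ν = ⊤) : μᗮ ⊔ νᗮ = ⊤ := by
  rw [eq_top_iff, ← LinearMap.range_eq_top.mpr hJ, LinearMap.range_eq_map, ← h,
    Submodule.map_sup]
  exact sup_le_sup (map_le_orthogonal_of_subset_omegaAnn hμ)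
    (map_le_orthogonal_of_subset_omegaAnn hν)

end Symplectic

theorem lagrangian_transversal_iff_sum_proj_bijective_general
    {H : Type*} [NormedAddCommGroup H] [InnerProductSpace ℝ H]
    (J : H →L[ℝ] H) (hJ2 : ∀ x : H, J (J x) = -x)
    (μ ν : Submodule ℝ H)
    (hμ : omegaAnn J (μ : Set H) = (μ : Set H))
    (hν : omegaAnn J (ν : Set H) = (ν : Set H))
    (P Q : H →L[ℝ] H)
    (hPsa : ∀ x y : H, ⟪P x, y⟫ = ⟪x, P y⟫) (hPidem : P.comp P = P)
    (hPrange : LinearMap.range (P : H →ₗ[ℝ] H) = μ)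
    (hQsa : ∀ x y : H, ⟪Q x, y⟫ = ⟪x, Q y⟫) (hQidem : Q.comp Q = Q)
    (hQrange : LinearMap.range (Q : H →ₗ[ℝ] H) = ν) :
    μ ⊔ ν = ⊤ ↔ Function.Bijective ⇑(P + Q) := by
  refine ⟨fun h => ?_, fun h => ?_⟩
  · have hJ : Function.Surjective J := fun x => ⟨-J x, by rw [map_neg, hJ2, neg_neg]⟩
    obtain ⟨_, rfl⟩ := P.exists_eq_starProjection_of_isSymmetricProjection
      ⟨ContinuousLinearMap.IsIdempotentElem.toLinearMap hPidem, hPsa⟩ hPrange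
    obtain ⟨_, rfl⟩ := Q.exists_eq_starProjection_of_isSymmetricProjection
      ⟨ContinuousLinearMap.IsIdempotentElem.toLinearMap hQidem, hQsa⟩ hQrange
    exact μ.starProjection_add_bijective ν h
      (orthogonal_sup_orthogonal_eq_top_of_subset_omegaAnn hJ hμ.ge hν.ge h)
  · rw [eq_top_iff, ← LinearMap.range_eq_top.mpr h.2, ← hPrange, ← hQrange]
    exact LinearMap.range_add_le _ _

/-- For Lagrangian subspaces `μ, ν`: `μ + ν = H` iff `P_μ + P_ν` is bijective. -/
theorem lagrangian_transversal_iff_sum_proj_bijective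
    {H : Type*} [NormedAddCommGroup H] [InnerProductSpace ℝ H] [CompleteSpace H]
    (J : H →L[ℝ] H) (hJ2 : ∀ x : H, J (J x) = -x)
    (hJorth : ∀ x y : H, ⟪J x, J y⟫ = ⟪x, y⟫)
    (μ ν : Submodule ℝ H)
    (hμ : omegaAnn J (μ : Set H) = (μ : Set H))
    (hν : omegaAnn J (ν : Set H) = (ν : Set H))
    (P Q : H →L[ℝ] H)
    (hPsa : ∀ x y : H, ⟪P x, y⟫ = ⟪x, P y⟫) (hPidem : P.comp P = P)
    (hPrange : LinearMap.range (P : H →ₗ[ℝ] H) = μ)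
    (hQsa : ∀ x y : H, ⟪Q x, y⟫ = ⟪x, Q y⟫) (hQidem : Q.comp Q = Q)
    (hQrange : LinearMap.range (Q : H →ₗ[ℝ] H) = ν) :
    μ ⊔ ν = ⊤ ↔ Function.Bijective ⇑(P + Q) :=
  lagrangian_transversal_iff_sum_proj_bijective_general J hJ2 μ ν hμ hν P Q hPsa hPidem hPrange hQsa
    hQidem hQrange
end

section
/- Fix a Lagrangian subspace λ of H. For each bounded selfadjoint operator A on λ set G_λ(A) = {x + J(A x) : x ∈ λ}. Then each G_λ(A) is a Lagrangian subspace of H with G_λ(A) + λ^⊥ = H; the map A ↦ G_λ(A) is a bijection from the space of bounded selfadjoint operators on λ onto the set of Lagrangian subspaces μ of H with μ + λ^⊥ = H; and the map A ↦ P_{G_λ(A)} is a homeomorphism from the space of bounded selfadjoint operators on λ (operator-norm topology) onto the set of orthogonal projections of H whose range is a Lagrangian subspace μ with μ + λ^⊥ = H (operator-norm topology). -/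
/-!
Because `λ` is Lagrangian, `J` maps `λ` onto `λᗮ`, so every `z : H` is uniquely `x + J w` with
`x = P_λ z` and `w = P_λ (-J z)` in `λ`. In these coordinates
`ω(x + J w, y + J v) = ⟪x, v⟫ - ⟪w, y⟫`, so the graph of `A` is Lagrangian exactly when `A` is
selfadjoint; and a closed subspace that meets `λᗮ` trivially and spans `H` together with it is the
graph of `x ↦ w`, which is bounded by the open mapping theorem.

Writing `Γ_A x = x + J (A x)`, we have `‖x‖ ≤ ‖Γ_A x‖`, so `Γ_A* Γ_A` is invertible (Lax–Milgram)
and `P_{G_λ(A)} = Γ_A (Γ_A* Γ_A)⁻¹ Γ_A*`, which is continuous in `A` since inversion is continuous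
on units. Conversely, restricted to `λ` this projection has coordinates `C` and `A C` with `C`
invertible, so `A` is recovered from the projection by an equally continuous formula.
-/

open scoped RealInnerProductSpace

/-- The graph `G_λ(A) = {x + J (A x) : x ∈ λ}` of a bounded operator `A` on `λ`. -/
def graphSet {H : Type*} [NormedAddCommGroup H] [InnerProductSpace ℝ H]
    (J : H →L[ℝ] H) (l : Submodule ℝ H) (A : ↥l →L[ℝ] ↥l) : Set H :=
  {y : H | ∃ x : ↥l, y = (x : H) + J (A x)}

section GraphChart

open scoped InnerProduct
open ContinuousLinearMap

section RangeProjection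

variable {𝕜 E F : Type*} [RCLike 𝕜]
  [NormedAddCommGroup E] [InnerProductSpace 𝕜 E] [CompleteSpace E]
  [NormedAddCommGroup F] [InnerProductSpace 𝕜 F] [CompleteSpace F]

noncomputable def rangeProjection (T : E →L[𝕜] F) : F →L[𝕜] F :=
  T ∘L Ring.inverse (T† ∘L T) ∘L T†

variable {T : E →L[𝕜] F}

theorem rangeProjection_comp_self (h : IsUnit (T† ∘L T)) : rangeProjection T ∘L T = T := by
  have : Ring.inverse (T† ∘L T) ∘L (T† ∘L T) = ContinuousLinearMap.id 𝕜 E :=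
    Ring.inverse_mul_cancel _ h
  simp only [rangeProjection, comp_assoc, this, comp_id]

theorem isStarProjection_rangeProjection (h : IsUnit (T† ∘L T)) :
    IsStarProjection (rangeProjection T) := by
  refine ⟨?_, ?_⟩
  · change rangeProjection T ∘L (T ∘L _) = _
    rw [← comp_assoc, rangeProjection_comp_self h, rangeProjection]
  · have hC : (Ring.inverse (T† ∘L T))† = Ring.inverse (T† ∘L T) := by
      refine isSelfAdjoint_iff'.1 (IsSelfAdjoint.ringInverse ?_)
      rw [isSelfAdjoint_iff', adjoint_comp, adjoint_adjoint]
    rw [isSelfAdjoint_iff', rangeProjection, adjoint_comp, adjoint_comp, adjoint_adjoint, hC,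
      comp_assoc]

theorem range_rangeProjection (h : IsUnit (T† ∘L T)) :
    Set.range (rangeProjection T) = Set.range T := by
  refine subset_antisymm (fun _ ⟨x, hx⟩ => ⟨_, hx⟩) ?_
  rintro _ ⟨x, rfl⟩
  exact ⟨T x, congr($(rangeProjection_comp_self h) x)⟩

theorem continuousAt_rangeProjection (h : IsUnit (T† ∘L T)) :
    ContinuousAt rangeProjection T := by
  have hadj : Continuous fun S : E →L[𝕜] F => S† := adjoint.continuous
  have hinv : ContinuousAt (fun S : E →L[𝕜] F => Ring.inverse (S† ∘L S)) T := by
    have := NormedRing.inverse_continuousAt h.unit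
    rw [h.unit_spec] at this
    exact this.comp (f := fun S : E →L[𝕜] F => S† ∘L S) (hadj.clm_comp continuous_id).continuousAt
  exact continuousAt_id.clm_comp (hinv.clm_comp hadj.continuousAt)

end RangeProjection

section Real

variable {E F : Type*}
  [NormedAddCommGroup E] [InnerProductSpace ℝ E] [CompleteSpace E]
  [NormedAddCommGroup F] [InnerProductSpace ℝ F] [CompleteSpace F]

theorem isUnit_of_norm_sq_le_inner {S : E →L[ℝ] E} (hS : ∀ x, ‖x‖ ^ 2 ≤ ⟪S x, x⟫) :
    IsUnit S := by
  have hB : IsCoercive ((innerSL ℝ : E →L[ℝ] E →L[ℝ] ℝ) ∘L S) :=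
    ⟨1, one_pos, fun x => by rw [one_mul, ← sq]; exact hS x⟩
  refine ⟨(ContinuousLinearEquiv.unitsEquiv ℝ E).symm hB.continuousLinearEquivOfBilin, ?_⟩
  ext x
  exact ext_inner_right ℝ fun y => hB.continuousLinearEquivOfBilin_apply x y

theorem isUnit_adjoint_comp_self_of_norm_le {T : E →L[ℝ] F} (hT : ∀ x, ‖x‖ ≤ ‖T x‖) :
    IsUnit (T† ∘L T) :=
  isUnit_of_norm_sq_le_inner fun x => by
    rw [comp_apply, adjoint_inner_left, real_inner_self_eq_norm_sq]
    gcongr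
    exact hT x

theorem isStarProjection_iff_forall_inner {P : E →L[ℝ] E} :
    IsStarProjection P ↔ (∀ x y, ⟪P x, y⟫ = ⟪x, P y⟫) ∧ P.comp P = P := by
  rw [isStarProjection_iff, isSelfAdjoint_iff_isSymmetric, and_comm]
  rfl

end Real

variable {H : Type*} [NormedAddCommGroup H] [InnerProductSpace ℝ H]

structure IsOrthogonalComplexStructure (J : H →L[ℝ] H) : Prop where
  apply_apply : ∀ x, J (J x) = -x
  inner_apply_apply : ∀ x y, ⟪J x, J y⟫ = ⟪x, y⟫

def omegaAnnSubmodule (J : H →L[ℝ] H) (μ : Set H) : Submodule ℝ H where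
  carrier := omegaAnn J μ
  add_mem' ha hb y hy := by rw [map_add, inner_add_left, ha y hy, hb y hy, add_zero]
  zero_mem' y _ := by rw [map_zero, inner_zero_left]
  smul_mem' c x hx y hy := by rw [map_smul, real_inner_smul_left, hx y hy, mul_zero]

theorem isClosed_omegaAnn (J : H →L[ℝ] H) (μ : Set H) : IsClosed (omegaAnn J μ) := by
  have : omegaAnn J μ = ⋂ y ∈ μ, {x | ⟪J x, y⟫ = 0} := by
    ext x
    simp [omegaAnn]
  rw [this]
  exact isClosed_biInter fun y _ => isClosed_eq (J.continuous.inner continuous_const)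
    continuous_const

section Lagrangian

variable {J : H →L[ℝ] H} {l : Submodule ℝ H}

theorem inner_apply_eq_zero_of_mem (hl : omegaAnn J l = l) {x y : H} (hx : x ∈ l)
    (hy : y ∈ l) : ⟪J x, y⟫ = 0 := by
  have hx' : x ∈ omegaAnn J l := by rw [hl]; exact hx
  exact hx' y hy

theorem apply_mem_orthogonal (hl : omegaAnn J l = l) {x : H} (hx : x ∈ l) : J x ∈ lᗮ :=
  (Submodule.mem_orthogonal' l (J x)).2 fun _ hy => inner_apply_eq_zero_of_mem hl hx hy

theorem neg_apply_mem_of_mem_orthogonal (hJ : IsOrthogonalComplexStructure J)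
    (hl : omegaAnn J l = l) {x : H} (hx : x ∈ lᗮ) : -J x ∈ l := by
  have h : -J x ∈ omegaAnn J l := fun y hy => by
    rw [map_neg, hJ.apply_apply, neg_neg]
    exact (Submodule.mem_orthogonal' l x).1 hx y hy
  rwa [hl] at h

theorem inner_apply_coe_add_apply (hJ : IsOrthogonalComplexStructure J)
    (hl : omegaAnn J l = l) (x w y v : l) :
    ⟪J ((x : H) + J w), (y : H) + J v⟫ = ⟪(x : H), v⟫ - ⟪(w : H), y⟫ := by
  rw [map_add, hJ.apply_apply, inner_add_left, inner_add_right, inner_add_right,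
    hJ.inner_apply_apply, inner_apply_eq_zero_of_mem hl x.2 y.2, inner_neg_left, inner_neg_left,
    real_inner_comm (J v), inner_apply_eq_zero_of_mem hl v.2 w.2]
  ring

theorem eq_zero_of_mem_of_mem_orthogonal (hJ : IsOrthogonalComplexStructure J)
    (hl : omegaAnn J l = l) {μ : Set H} (hμ : omegaAnn J μ = μ)
    (htr : ∀ z : H, ∃ u ∈ μ, ∃ v ∈ (lᗮ : Set H), z = u + v) {z : H} (hzμ : z ∈ μ)
    (hzl : z ∈ lᗮ) : z = 0 := by
  have hJz : ∀ y : H, ⟪J z, y⟫ = 0 := by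
    intro y
    obtain ⟨u, hu, v, hv, rfl⟩ := htr y
    have hzω : z ∈ omegaAnn J μ := by rw [hμ]; exact hzμ
    have hv' : -J v ∈ l := neg_apply_mem_of_mem_orthogonal hJ hl hv
    calc ⟪J z, u + v⟫ = ⟪J z, v⟫ := by rw [inner_add_right, hzω u hu, zero_add]
      _ = ⟪J z, J (-J v)⟫ := by rw [map_neg, hJ.apply_apply, neg_neg]
      _ = 0 := by rw [hJ.inner_apply_apply, Submodule.inner_left_of_mem_orthogonal hv' hzl]
  have := hJz (J z)
  rwa [hJ.inner_apply_apply, inner_self_eq_zero] at this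

noncomputable def graphMap (J : H →L[ℝ] H) (l : Submodule ℝ H) (A : l →L[ℝ] l) : l →L[ℝ] H :=
  l.subtypeL + J ∘L l.subtypeL ∘L A

theorem graphMap_apply (A : l →L[ℝ] l) (x : l) : graphMap J l A x = (x : H) + J (A x) := rfl

theorem range_graphMap (A : l →L[ℝ] l) : Set.range (graphMap J l A) = graphSet J l A := by
  ext y
  exact exists_congr fun x => eq_comm

theorem continuous_graphMap : Continuous (graphMap J l) :=
  continuous_const.add (continuous_const.clm_comp (continuous_const.clm_comp continuous_id))

theorem norm_le_norm_graphMap (hl : omegaAnn J l = l) (A : l →L[ℝ] l) (x : l) :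
    ‖x‖ ≤ ‖graphMap J l A x‖ := by
  have horth : ⟪(x : H), J (A x)⟫ = 0 :=
    Submodule.inner_right_of_mem_orthogonal x.2 (apply_mem_orthogonal hl (A x).2)
  refine (sq_le_sq₀ (norm_nonneg _) (norm_nonneg _)).1 ?_
  rw [graphMap_apply, norm_add_sq_real, horth, mul_zero, add_zero]
  exact le_add_of_nonneg_right (sq_nonneg _)

theorem isSymmetric_iff_graphSet_subset_omegaAnn (hJ : IsOrthogonalComplexStructure J)
    (hl : omegaAnn J l = l) {A : l →L[ℝ] l} :
    (A : l →ₗ[ℝ] l).IsSymmetric ↔ graphSet J l A ⊆ omegaAnn J (graphSet J l A) := by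
  have hω : ∀ x y : l, ⟪J ((x : H) + J (A x)), (y : H) + J (A y)⟫ = ⟪x, A y⟫ - ⟪A x, y⟫ := by
    intro x y
    rw [inner_apply_coe_add_apply hJ hl, Submodule.coe_inner, Submodule.coe_inner]
  constructor
  · rintro hA _ ⟨x, rfl⟩ _ ⟨y, rfl⟩
    rw [hω]
    exact sub_eq_zero.2 (hA x y).symm
  · intro h x y
    have := h ⟨x, rfl⟩ _ ⟨y, rfl⟩
    rw [hω] at this
    exact (sub_eq_zero.1 this).symm

variable [CompleteSpace l]

noncomputable def sndCoord (J : H →L[ℝ] H) (l : Submodule ℝ H) [CompleteSpace l] : H →L[ℝ] l :=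
  l.orthogonalProjectionOnto ∘L (-J)

theorem orthogonalProjectionOnto_coe_add_apply (hl : omegaAnn J l = l) (x w : l) :
    l.orthogonalProjectionOnto ((x : H) + J w) = x := by
  rw [map_add, Submodule.orthogonalProjectionOnto_mem_subspace_eq_self,
    Submodule.orthogonalProjectionOnto_apply_of_mem_orthogonal (apply_mem_orthogonal hl w.2),
    add_zero]

theorem sndCoord_coe_add_apply (hJ : IsOrthogonalComplexStructure J) (hl : omegaAnn J l = l)
    (x w : l) : sndCoord J l ((x : H) + J w) = w := by
  rw [sndCoord, comp_apply, neg_apply, map_add, hJ.apply_apply, neg_add, neg_neg, map_add,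
    Submodule.orthogonalProjectionOnto_apply_of_mem_orthogonal
      (neg_mem (apply_mem_orthogonal hl x.2)),
    Submodule.orthogonalProjectionOnto_mem_subspace_eq_self, zero_add]

theorem coe_orthogonalProjectionOnto_add_apply_sndCoord (hJ : IsOrthogonalComplexStructure J)
    (hl : omegaAnn J l = l) (z : H) :
    (l.orthogonalProjectionOnto z : H) + J (sndCoord J l z) = z := by
  obtain ⟨w, hw⟩ : ∃ w : l, (l.orthogonalProjectionOnto z : H) + J w = z := by
    have hv := l.sub_starProjection_mem_orthogonal z
    refine ⟨⟨-J _, neg_apply_mem_of_mem_orthogonal hJ hl hv⟩, ?_⟩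
    rw [map_neg, hJ.apply_apply, neg_neg, ← Submodule.starProjection_apply, add_sub_cancel]
  have hsnd : sndCoord J l z = w := by
    rw [← hw, sndCoord_coe_add_apply hJ hl]
  rw [hsnd, hw]

theorem orthogonalProjectionOnto_comp_graphMap (hl : omegaAnn J l = l) (A : l →L[ℝ] l) :
    l.orthogonalProjectionOnto ∘L graphMap J l A = ContinuousLinearMap.id ℝ l :=
  ContinuousLinearMap.ext fun x => orthogonalProjectionOnto_coe_add_apply hl x (A x)

theorem sndCoord_comp_graphMap (hJ : IsOrthogonalComplexStructure J) (hl : omegaAnn J l = l)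
    (A : l →L[ℝ] l) : sndCoord J l ∘L graphMap J l A = A :=
  ContinuousLinearMap.ext fun x => sndCoord_coe_add_apply hJ hl x (A x)

theorem omegaAnn_graphSet_subset (hJ : IsOrthogonalComplexStructure J) (hl : omegaAnn J l = l)
    {A : l →L[ℝ] l} (hA : (A : l →ₗ[ℝ] l).IsSymmetric) :
    omegaAnn J (graphSet J l A) ⊆ graphSet J l A := by
  intro z hz
  set x := l.orthogonalProjectionOnto z
  set w := sndCoord J l z
  have hzxw : z = (x : H) + J w := (coe_orthogonalProjectionOnto_add_apply_sndCoord hJ hl z).symm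
  have hperp : ∀ y : l, ⟪A x - w, y⟫ = 0 := fun y => by
    have := hz _ ⟨y, rfl⟩
    have hAxy : ⟪A x, y⟫ = ⟪x, A y⟫ := hA x y
    rw [hzxw, inner_apply_coe_add_apply hJ hl, ← Submodule.coe_inner, ← Submodule.coe_inner,
      ← hAxy] at this
    rw [inner_sub_left, this]
  have hAx : A x = w := sub_eq_zero.1 (inner_self_eq_zero.1 (hperp _))
  exact ⟨x, by rw [hAx, ← hzxw]⟩

theorem omegaAnn_graphSet (hJ : IsOrthogonalComplexStructure J) (hl : omegaAnn J l = l)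
    {A : l →L[ℝ] l} (hA : (A : l →ₗ[ℝ] l).IsSymmetric) :
    omegaAnn J (graphSet J l A) = graphSet J l A :=
  (omegaAnn_graphSet_subset hJ hl hA).antisymm
    ((isSymmetric_iff_graphSet_subset_omegaAnn hJ hl).1 hA)

theorem exists_graphSet_add_orthogonal (hJ : IsOrthogonalComplexStructure J)
    (hl : omegaAnn J l = l) (A : l →L[ℝ] l) (z : H) :
    ∃ u ∈ graphSet J l A, ∃ v ∈ (lᗮ : Set H), z = u + v := by
  set x := l.orthogonalProjectionOnto z
  set w := sndCoord J l z
  refine ⟨x + J (A x), ⟨x, rfl⟩, J ((w : H) - A x),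
    apply_mem_orthogonal hl (sub_mem w.2 (A x).2), ?_⟩
  rw [map_sub, add_add_sub_cancel, coe_orthogonalProjectionOnto_add_apply_sndCoord hJ hl]

theorem graphSet_injective (hJ : IsOrthogonalComplexStructure J) (hl : omegaAnn J l = l) :
    Function.Injective (graphSet J l) := by
  intro A B h
  ext x
  obtain ⟨y, hy⟩ : (x : H) + J (A x) ∈ graphSet J l B := h ▸ ⟨x, rfl⟩
  have hxy := congrArg l.orthogonalProjectionOnto hy
  have hAB := congrArg (sndCoord J l) hy
  rw [orthogonalProjectionOnto_coe_add_apply hl, orthogonalProjectionOnto_coe_add_apply hl] at hxy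
  rw [sndCoord_coe_add_apply hJ hl, sndCoord_coe_add_apply hJ hl] at hAB
  rw [hAB, hxy]

theorem exists_graphSet_eq (hJ : IsOrthogonalComplexStructure J) (hl : omegaAnn J l = l)
    (M : Submodule ℝ H) [CompleteSpace M] (hdisj : ∀ z ∈ M, z ∈ lᗮ → z = 0)
    (htr : ∀ z : H, ∃ u ∈ M, ∃ v ∈ (lᗮ : Set H), z = u + v) :
    ∃ A : l →L[ℝ] l, graphSet J l A = M := by
  set T : M →L[ℝ] l := l.orthogonalProjectionOnto ∘L M.subtypeL
  have hker : T.ker = ⊥ := by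
    refine (Submodule.eq_bot_iff _).2 fun m hm => Subtype.ext (hdisj m m.2 ?_)
    exact l.orthogonalProjectionOnto_eq_zero_iff.1 hm
  have hrange : T.range = ⊤ := by
    refine LinearMap.range_eq_top.2 fun x => ?_
    obtain ⟨u, hu, v, hv, hx⟩ := htr x
    refine ⟨⟨u, hu⟩, ?_⟩
    change l.orthogonalProjectionOnto u = x
    rw [eq_sub_of_add_eq hx.symm, map_sub, Submodule.orthogonalProjectionOnto_mem_subspace_eq_self,
      Submodule.orthogonalProjectionOnto_apply_of_mem_orthogonal hv, sub_zero]
  set e := ContinuousLinearEquiv.ofBijective T hker hrange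
  set A : l →L[ℝ] l := sndCoord J l ∘L M.subtypeL ∘L (e.symm : l →L[ℝ] M)
  have hM : ∀ m : M, (m : H) = (e m : H) + J (A (e m)) := fun m => by
    change (m : H) = l.orthogonalProjectionOnto m + J (sndCoord J l (e.symm (e m) : H))
    rw [e.symm_apply_apply, coe_orthogonalProjectionOnto_add_apply_sndCoord hJ hl]
  refine ⟨A, subset_antisymm ?_ fun z hz => ⟨e ⟨z, hz⟩, hM ⟨z, hz⟩⟩⟩
  rintro _ ⟨x, rfl⟩
  rw [← e.apply_symm_apply x, ← hM]
  exact (e.symm x).2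

theorem exists_isSymmetric_graphSet_eq [CompleteSpace H] (hJ : IsOrthogonalComplexStructure J)
    (hl : omegaAnn J l = l) {μ : Set H} (hμ : omegaAnn J μ = μ)
    (htr : ∀ z : H, ∃ u ∈ μ, ∃ v ∈ (lᗮ : Set H), z = u + v) :
    ∃ A : l →L[ℝ] l, (A : l →ₗ[ℝ] l).IsSymmetric ∧ graphSet J l A = μ := by
  set M := (omegaAnnSubmodule J μ).copy μ hμ.symm
  have : CompleteSpace M := (hμ ▸ isClosed_omegaAnn J μ : IsClosed μ).completeSpace_coe
  obtain ⟨A, hA⟩ := exists_graphSet_eq hJ hl M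
    (fun _ => eq_zero_of_mem_of_mem_orthogonal hJ hl hμ htr) htr
  refine ⟨A, (isSymmetric_iff_graphSet_subset_omegaAnn hJ hl).2 ?_, hA⟩
  rw [hA]
  exact hμ.ge

variable [CompleteSpace H]

theorem adjoint_graphMap_comp_subtypeL (hl : omegaAnn J l = l) (A : l →L[ℝ] l) :
    (graphMap J l A)† ∘L l.subtypeL = ContinuousLinearMap.id ℝ l :=
  ContinuousLinearMap.ext fun x => ext_inner_right ℝ fun y => by
    rw [comp_apply, adjoint_inner_left, Submodule.subtypeL_apply, graphMap_apply,
      inner_add_right, Submodule.inner_right_of_mem_orthogonal x.2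
        (apply_mem_orthogonal hl (A y).2), add_zero, id_apply, Submodule.coe_inner]

theorem isUnit_adjoint_comp_graphMap (hl : omegaAnn J l = l) (A : l →L[ℝ] l) :
    IsUnit ((graphMap J l A)† ∘L graphMap J l A) :=
  isUnit_adjoint_comp_self_of_norm_le (norm_le_norm_graphMap hl A)

theorem range_rangeProjection_graphMap (hl : omegaAnn J l = l) (A : l →L[ℝ] l) :
    Set.range (rangeProjection (graphMap J l A)) = graphSet J l A := by
  rw [range_rangeProjection (isUnit_adjoint_comp_graphMap hl A), range_graphMap]

theorem rangeProjection_graphMap_comp_subtypeL (hl : omegaAnn J l = l) (A : l →L[ℝ] l) :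
    rangeProjection (graphMap J l A) ∘L l.subtypeL =
      graphMap J l A ∘L Ring.inverse ((graphMap J l A)† ∘L graphMap J l A) := by
  rw [rangeProjection, comp_assoc, comp_assoc, adjoint_graphMap_comp_subtypeL hl, comp_id]

noncomputable def operatorOfProjection (J : H →L[ℝ] H) (l : Submodule ℝ H) [CompleteSpace l]
    (P : H →L[ℝ] H) : l →L[ℝ] l :=
  (sndCoord J l ∘L P ∘L l.subtypeL) ∘L Ring.inverse (l.orthogonalProjectionOnto ∘L P ∘L l.subtypeL)

theorem operatorOfProjection_rangeProjection_graphMap (hJ : IsOrthogonalComplexStructure J)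
    (hl : omegaAnn J l = l) (A : l →L[ℝ] l) :
    operatorOfProjection J l (rangeProjection (graphMap J l A)) = A := by
  have hU := isUnit_adjoint_comp_graphMap hl A
  rw [operatorOfProjection, rangeProjection_graphMap_comp_subtypeL hl, ← comp_assoc,
    ← comp_assoc, orthogonalProjectionOnto_comp_graphMap hl, sndCoord_comp_graphMap hJ hl,
    id_comp, Ring.inverse_inverse hU, comp_assoc]
  exact (congrArg A.comp (Ring.inverse_mul_cancel _ hU)).trans (comp_id A)

theorem continuousAt_operatorOfProjection (hl : omegaAnn J l = l) (A : l →L[ℝ] l) :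
    ContinuousAt (operatorOfProjection J l) (rangeProjection (graphMap J l A)) := by
  have hU := isUnit_adjoint_comp_graphMap hl A
  have hcoord : ∀ Q : H →L[ℝ] l, Continuous fun P : H →L[ℝ] H => Q ∘L P ∘L l.subtypeL :=
    fun Q => continuous_const.clm_comp (continuous_id.clm_comp continuous_const)
  have hD : l.orthogonalProjectionOnto ∘L rangeProjection (graphMap J l A) ∘L l.subtypeL =
      Ring.inverse ((graphMap J l A)† ∘L graphMap J l A) := by
    rw [rangeProjection_graphMap_comp_subtypeL hl, ← comp_assoc,
      orthogonalProjectionOnto_comp_graphMap hl, id_comp]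
  have hinv := NormedRing.inverse_continuousAt (R := l →L[ℝ] l) hU.unit⁻¹
  rw [← Ring.inverse_unit, hU.unit_spec, ← hD] at hinv
  exact (hcoord _).continuousAt.clm_comp
    (hinv.comp (f := fun P : H →L[ℝ] H => l.orthogonalProjectionOnto ∘L P ∘L l.subtypeL)
      (hcoord _).continuousAt)

end Lagrangian

def transversalLagrangianProjections (J : H →L[ℝ] H) (l : Submodule ℝ H) : Set (H →L[ℝ] H) :=
  {P | (∀ x y : H, ⟪P x, y⟫ = ⟪x, P y⟫) ∧ P.comp P = P ∧
    omegaAnn J (Set.range P) = Set.range P ∧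
    ∀ z : H, ∃ u ∈ Set.range P, ∃ v ∈ (lᗮ : Set H), z = u + v}

section Chart

variable [CompleteSpace H] {J : H →L[ℝ] H} {l : Submodule ℝ H} [CompleteSpace l]
  (hJ : IsOrthogonalComplexStructure J) (hl : omegaAnn J l = l)
include hJ hl

theorem rangeProjection_graphMap_mem {A : l →L[ℝ] l} (hA : (A : l →ₗ[ℝ] l).IsSymmetric) :
    rangeProjection (graphMap J l A) ∈ transversalLagrangianProjections J l := by
  have hP := isStarProjection_iff_forall_inner.1
    (isStarProjection_rangeProjection (isUnit_adjoint_comp_graphMap hl A))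
  refine ⟨hP.1, hP.2, ?_, ?_⟩ <;> rw [range_rangeProjection_graphMap hl]
  · exact omegaAnn_graphSet hJ hl hA
  · exact exists_graphSet_add_orthogonal hJ hl A

theorem exists_eq_rangeProjection_graphMap {P : H →L[ℝ] H}
    (hP : P ∈ transversalLagrangianProjections J l) :
    ∃ A : l →L[ℝ] l, (A : l →ₗ[ℝ] l).IsSymmetric ∧ P = rangeProjection (graphMap J l A) := by
  obtain ⟨hsymm, hidem, hμ, htr⟩ := hP
  obtain ⟨A, hA, hgraph⟩ := exists_isSymmetric_graphSet_eq hJ hl hμ htr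
  have hU := isUnit_adjoint_comp_graphMap hl A
  refine ⟨A, hA, (isStarProjection_iff_forall_inner.2 ⟨hsymm, hidem⟩).ext
    (isStarProjection_rangeProjection hU) (SetLike.coe_injective ?_)⟩
  simp only [LinearMap.coe_range, coe_coe]
  rw [range_rangeProjection_graphMap hl, hgraph]

noncomputable def graphProjectionHomeomorph :
    {A : l →L[ℝ] l // (A : l →ₗ[ℝ] l).IsSymmetric} ≃ₜ transversalLagrangianProjections J l where
  toFun A := ⟨rangeProjection (graphMap J l A), rangeProjection_graphMap_mem hJ hl A.2⟩
  invFun P := ⟨operatorOfProjection J l P, by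
    obtain ⟨A, hA, hPA⟩ := exists_eq_rangeProjection_graphMap hJ hl P.2
    rwa [hPA, operatorOfProjection_rangeProjection_graphMap hJ hl]⟩
  left_inv A := Subtype.ext (operatorOfProjection_rangeProjection_graphMap hJ hl A)
  right_inv P := Subtype.ext <| by
    obtain ⟨A, -, hPA⟩ := exists_eq_rangeProjection_graphMap hJ hl P.2
    change rangeProjection (graphMap J l (operatorOfProjection J l P)) = P
    rw [hPA, operatorOfProjection_rangeProjection_graphMap hJ hl]
  continuous_toFun := by
    refine Continuous.subtype_mk (continuous_iff_continuousAt.2 fun A => ?_) _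
    exact ((continuousAt_rangeProjection (isUnit_adjoint_comp_graphMap hl A.1)).comp
      continuous_graphMap.continuousAt).comp continuous_subtype_val.continuousAt
  continuous_invFun := by
    refine Continuous.subtype_mk (continuous_iff_continuousAt.2 fun P => ?_) _
    obtain ⟨A, -, hPA⟩ := exists_eq_rangeProjection_graphMap hJ hl P.2
    exact (hPA ▸ continuousAt_operatorOfProjection hl A).comp continuous_subtype_val.continuousAt

end Chart

end GraphChart

/-- For a fixed Lagrangian `λ`, the map `A ↦ G_λ(A)` is a bijection from bounded selfadjoint
operators on `λ` onto Lagrangian subspaces transversal to `λᗮ`, each `G_λ(A)` indeed being such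
a Lagrangian; and `A ↦ P_{G_λ(A)}` is a homeomorphism onto the corresponding set of orthogonal
projections (operator-norm topology). -/
theorem graph_chart_of_lagrangian
    {H : Type*} [NormedAddCommGroup H] [InnerProductSpace ℝ H] [CompleteSpace H]
    (J : H →L[ℝ] H) (hJ2 : ∀ x : H, J (J x) = -x)
    (hJorth : ∀ x y : H, ⟪J x, J y⟫ = ⟪x, y⟫)
    (l : Submodule ℝ H) (hl : omegaAnn J (l : Set H) = (l : Set H)) :
    (∀ A : ↥l →L[ℝ] ↥l, (∀ x y : ↥l, ⟪A x, y⟫ = ⟪x, A y⟫) →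
        omegaAnn J (graphSet J l A) = graphSet J l A ∧
        ∀ z : H, ∃ u ∈ graphSet J l A, ∃ v ∈ (lᗮ : Set H), z = u + v) ∧
    (∀ A B : ↥l →L[ℝ] ↥l, (∀ x y : ↥l, ⟪A x, y⟫ = ⟪x, A y⟫) →
        (∀ x y : ↥l, ⟪B x, y⟫ = ⟪x, B y⟫) →
        graphSet J l A = graphSet J l B → A = B) ∧
    (∀ μ : Set H, omegaAnn J μ = μ →
        (∀ z : H, ∃ u ∈ μ, ∃ v ∈ (lᗮ : Set H), z = u + v) →
        ∃ A : ↥l →L[ℝ] ↥l, (∀ x y : ↥l, ⟪A x, y⟫ = ⟪x, A y⟫) ∧ graphSet J l A = μ) ∧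
    ∃ φ : {A : ↥l →L[ℝ] ↥l // ∀ x y : ↥l, ⟪A x, y⟫ = ⟪x, A y⟫} ≃ₜ
        {P : H →L[ℝ] H // (∀ x y : H, ⟪P x, y⟫ = ⟪x, P y⟫) ∧ P.comp P = P ∧
          omegaAnn J (Set.range ⇑P) = Set.range ⇑P ∧
          ∀ z : H, ∃ u ∈ Set.range ⇑P, ∃ v ∈ (lᗮ : Set H), z = u + v},
      ∀ A, Set.range ⇑(φ A).1 = graphSet J l A.1 := by
  have hJ : IsOrthogonalComplexStructure J := ⟨hJ2, hJorth⟩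
  have : CompleteSpace l := (hl ▸ isClosed_omegaAnn J l : IsClosed (l : Set H)).completeSpace_coe
  exact ⟨fun A hA => ⟨omegaAnn_graphSet hJ hl hA, exists_graphSet_add_orthogonal hJ hl A⟩,
    fun _ _ _ _ h => graphSet_injective hJ hl h,
    fun _ hμ htr => exists_isSymmetric_graphSet_eq hJ hl hμ htr,
    graphProjectionHomeomorph hJ hl, fun A => range_rangeProjection_graphMap hl A.1⟩
end

section
/- Let ℓ₁ and ℓ₂ be closed subspaces of a real Hilbert space H and let P₁ denote the orthogonal projection of H onto ℓ₁^⊥. Then (ℓ₁, ℓ₂) is a Fredholm pair if and only if the restriction P₁|_{ℓ₂} : ℓ₂ → ℓ₁^⊥ is a Fredholm operator; moreover in that case ker(P₁|_{ℓ₂}) = ℓ₁ ∩ ℓ₂ and dim(ℓ₁^⊥ / P₁(ℓ₂)) = dim(H / (ℓ₁ + ℓ₂)), so the Fredholm index of P₁|_{ℓ₂} equals dim(ℓ₁ ∩ ℓ₂) − dim(H / (ℓ₁ + ℓ₂)). -/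
open scoped RealInnerProductSpace

/-- A pair of closed subspaces is a Fredholm pair if their intersection is finite-dimensional
and their sum is closed and of finite codimension. -/
def IsFredholmPair {H : Type*} [NormedAddCommGroup H] [InnerProductSpace ℝ H]
    (μ ν : Submodule ℝ H) : Prop :=
  FiniteDimensional ℝ ↥(μ ⊓ ν) ∧ IsClosed ((μ ⊔ ν : Submodule ℝ H) : Set H) ∧
    FiniteDimensional ℝ (H ⧸ (μ ⊔ ν))

/-!
Write `π : H → ℓ₁ᗮ` for the orthogonal projection, so that `P₁|_{ℓ₂} = π|_{ℓ₂}`. Since `π` is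
surjective with kernel `ℓ₁`, `π⁻¹(π ℓ₂) = ℓ₁ + ℓ₂`; hence `ker (π|_{ℓ₂}) = ℓ₁ ∩ ℓ₂` and `π` induces
`H / (ℓ₁ + ℓ₂) ≃ ℓ₁ᗮ / π ℓ₂`. Because `π` has a continuous section (the inclusion), it is a quotient
map, so `π ℓ₂` is closed exactly when its preimage `ℓ₁ + ℓ₂` is.
-/

open LinearMap Topology

namespace LinearMap

def IsFredholm {𝕜 E F : Type*} [DivisionRing 𝕜] [AddCommGroup E] [Module 𝕜 E] [AddCommGroup F]
    [Module 𝕜 F] [TopologicalSpace F] (T : E →ₗ[𝕜] F) : Prop :=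
  FiniteDimensional 𝕜 (ker T) ∧ IsClosed (range T : Set F) ∧ FiniteDimensional 𝕜 (F ⧸ range T)

section

variable {R E F : Type*} [Ring R] [AddCommGroup E] [Module R E] [AddCommGroup F] [Module R F]
  (f : E →ₗ[R] F) (p : Submodule R E)

theorem ker_domRestrict_eq_comap_inf : ker (f.domRestrict p) = (ker f ⊓ p).comap p.subtype := by
  rw [ker_domRestrict, Submodule.comap_inf, Submodule.comap_subtype_self, inf_top_eq]

noncomputable def kerDomRestrictEquiv : ker (f.domRestrict p) ≃ₗ[R] ↥(ker f ⊓ p) :=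
  (LinearEquiv.ofEq _ _ (ker_domRestrict_eq_comap_inf f p)).trans
    (Submodule.comapSubtypeEquivOfLe inf_le_right)

theorem comap_range_domRestrict : (range (f.domRestrict p)).comap f = ker f ⊔ p := by
  rw [range_domRestrict, Submodule.comap_map_eq, sup_comm]

variable {f}

noncomputable def quotSupEquivQuotRangeDomRestrict (hf : Function.Surjective f) :
    (E ⧸ (ker f ⊔ p)) ≃ₗ[R] F ⧸ range (f.domRestrict p) :=
  (Submodule.quotEquivOfEq _ _ <| by
      rw [ker_comp, Submodule.ker_mkQ, comap_range_domRestrict]).trans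
    (((range (f.domRestrict p)).mkQ ∘ₗ f).quotKerEquivOfSurjective
      ((Submodule.mkQ_surjective _).comp hf))

variable [TopologicalSpace E] [TopologicalSpace F]

theorem isClosed_range_domRestrict_iff (hf : IsQuotientMap f) :
    IsClosed (range (f.domRestrict p) : Set F) ↔
      IsClosed ((ker f ⊔ p : Submodule R E) : Set E) := by
  rw [← comap_range_domRestrict, Submodule.comap_coe, hf.isCoinducing.isClosed_preimage]

end

theorem isFredholm_domRestrict_iff {𝕜 E F : Type*} [DivisionRing 𝕜] [AddCommGroup E] [Module 𝕜 E]
    [AddCommGroup F] [Module 𝕜 F] [TopologicalSpace E] [TopologicalSpace F] {f : E →ₗ[𝕜] F}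
    (hf : IsQuotientMap f) (p : Submodule 𝕜 E) :
    (f.domRestrict p).IsFredholm ↔
      FiniteDimensional 𝕜 ↥(ker f ⊓ p) ∧ IsClosed ((ker f ⊔ p : Submodule 𝕜 E) : Set E) ∧
        FiniteDimensional 𝕜 (E ⧸ (ker f ⊔ p)) :=
  and_congr (Module.Finite.equiv_iff (kerDomRestrictEquiv f p)) <|
    and_congr (isClosed_range_domRestrict_iff p hf)
      (Module.Finite.equiv_iff (quotSupEquivQuotRangeDomRestrict p hf.surjective)).symm

end LinearMap

section OrthogonalProjection

variable {𝕜 E : Type*} [RCLike 𝕜] [NormedAddCommGroup E] [InnerProductSpace 𝕜 E]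

theorem ContinuousLinearMap.eq_starProjection_of_isSymmetric_of_range_eq {P : E →L[𝕜] E}
    (hsymm : (P : E →ₗ[𝕜] E).IsSymmetric) (hidem : IsIdempotentElem P) {K : Submodule 𝕜 E}
    [K.HasOrthogonalProjection] (hrange : range (P : E →ₗ[𝕜] E) = K) :
    P = K.starProjection := by
  subst hrange
  obtain ⟨_, h⟩ := LinearMap.isSymmetricProjection_iff_eq_coe_starProjection_range.mp
    ⟨congrArg ContinuousLinearMap.toLinearMap hidem, hsymm⟩
  exact ContinuousLinearMap.coe_injective h

theorem Submodule.isQuotientMap_orthogonalProjectionOnto (K : Submodule 𝕜 E)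
    [K.HasOrthogonalProjection] : IsQuotientMap K.orthogonalProjectionOnto :=
  .of_inverse continuous_subtype_val K.orthogonalProjectionOnto.continuous
    orthogonalProjectionOnto_mem_subspace_eq_self

end OrthogonalProjection

theorem fredholmPair_iff_projection_restriction_fredholm_general
    {H : Type*} [NormedAddCommGroup H] [InnerProductSpace ℝ H] [CompleteSpace H]
    (l₁ l₂ : Submodule ℝ H) (hl₁ : IsClosed (l₁ : Set H))
    (P₁ : H →L[ℝ] H)
    (hPsa : ∀ x y : H, ⟪P₁ x, y⟫ = ⟪x, P₁ y⟫) (hPidem : P₁.comp P₁ = P₁)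
    (hPrange : LinearMap.range (P₁ : H →ₗ[ℝ] H) = l₁ᗮ)
    (T : ↥l₂ →L[ℝ] ↥(l₁ᗮ)) (hT : ∀ x : ↥l₂, (T x : H) = P₁ x) :
    (IsFredholmPair l₁ l₂ ↔
        (FiniteDimensional ℝ ↥(LinearMap.ker (T : ↥l₂ →ₗ[ℝ] ↥(l₁ᗮ))) ∧
          IsClosed ((LinearMap.range (T : ↥l₂ →ₗ[ℝ] ↥(l₁ᗮ)) : Submodule ℝ ↥(l₁ᗮ)) : Set ↥(l₁ᗮ)) ∧
          FiniteDimensional ℝ (↥(l₁ᗮ) ⧸ LinearMap.range (T : ↥l₂ →ₗ[ℝ] ↥(l₁ᗮ))))) ∧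
    LinearMap.ker (T : ↥l₂ →ₗ[ℝ] ↥(l₁ᗮ)) = (l₁ ⊓ l₂).comap l₂.subtype ∧
    Module.rank ℝ (↥(l₁ᗮ) ⧸ LinearMap.range (T : ↥l₂ →ₗ[ℝ] ↥(l₁ᗮ))) = Module.rank ℝ (H ⧸ (l₁ ⊔ l₂)) ∧
    (IsFredholmPair l₁ l₂ →
      (Module.finrank ℝ ↥(LinearMap.ker (T : ↥l₂ →ₗ[ℝ] ↥(l₁ᗮ))) : ℤ)
          - (Module.finrank ℝ (↥(l₁ᗮ) ⧸ LinearMap.range (T : ↥l₂ →ₗ[ℝ] ↥(l₁ᗮ))) : ℤ)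
        = (Module.finrank ℝ ↥(l₁ ⊓ l₂) : ℤ)
          - (Module.finrank ℝ (H ⧸ (l₁ ⊔ l₂)) : ℤ)) := by
  have := hl₁.completeSpace_coe
  set f : H →ₗ[ℝ] ↥(l₁ᗮ) := (l₁ᗮ).orthogonalProjectionOnto.toLinearMap
  have hP : P₁ = (l₁ᗮ).starProjection :=
    P₁.eq_starProjection_of_isSymmetric_of_range_eq hPsa hPidem hPrange
  have hTf : (T : ↥l₂ →ₗ[ℝ] ↥(l₁ᗮ)) = f.domRestrict l₂ := by
    ext x
    simp [f, hT, hP, Submodule.coe_orthogonalProjectionOnto_apply]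
  have hker : ker f = l₁ := by
    rw [Submodule.ker_orthogonalProjectionOnto, Submodule.orthogonal_orthogonal]
  have hf : IsQuotientMap f := (l₁ᗮ).isQuotientMap_orthogonalProjectionOnto
  have hfredholm := isFredholm_domRestrict_iff hf l₂
  have eker := kerDomRestrictEquiv f l₂
  have ecoker := quotSupEquivQuotRangeDomRestrict l₂ hf.surjective
  rw [hker] at hfredholm eker ecoker
  rw [hTf]
  exact ⟨hfredholm.symm, by rw [ker_domRestrict_eq_comap_inf, hker], ecoker.rank_eq.symm,
    fun _ => by rw [eker.finrank_eq, ecoker.finrank_eq]⟩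

/-- `(ℓ₁, ℓ₂)` is a Fredholm pair iff the restriction to `ℓ₂` of the orthogonal projection
onto `ℓ₁ᗮ` is a Fredholm operator; its kernel is `ℓ₁ ∩ ℓ₂`, the dimension of its cokernel
equals `dim (H / (ℓ₁ + ℓ₂))`, and its index is `dim (ℓ₁ ∩ ℓ₂) − dim (H / (ℓ₁ + ℓ₂))`. -/
theorem fredholmPair_iff_projection_restriction_fredholm
    {H : Type*} [NormedAddCommGroup H] [InnerProductSpace ℝ H] [CompleteSpace H]
    (l₁ l₂ : Submodule ℝ H) (hl₁ : IsClosed (l₁ : Set H)) (hl₂ : IsClosed (l₂ : Set H))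
    (P₁ : H →L[ℝ] H)
    (hPsa : ∀ x y : H, ⟪P₁ x, y⟫ = ⟪x, P₁ y⟫) (hPidem : P₁.comp P₁ = P₁)
    (hPrange : LinearMap.range (P₁ : H →ₗ[ℝ] H) = l₁ᗮ)
    (T : ↥l₂ →L[ℝ] ↥(l₁ᗮ)) (hT : ∀ x : ↥l₂, (T x : H) = P₁ x) :
    (IsFredholmPair l₁ l₂ ↔
        (FiniteDimensional ℝ ↥(LinearMap.ker (T : ↥l₂ →ₗ[ℝ] ↥(l₁ᗮ))) ∧
          IsClosed ((LinearMap.range (T : ↥l₂ →ₗ[ℝ] ↥(l₁ᗮ)) : Submodule ℝ ↥(l₁ᗮ)) : Set ↥(l₁ᗮ)) ∧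
          FiniteDimensional ℝ (↥(l₁ᗮ) ⧸ LinearMap.range (T : ↥l₂ →ₗ[ℝ] ↥(l₁ᗮ))))) ∧
    LinearMap.ker (T : ↥l₂ →ₗ[ℝ] ↥(l₁ᗮ)) = (l₁ ⊓ l₂).comap l₂.subtype ∧
    Module.rank ℝ (↥(l₁ᗮ) ⧸ LinearMap.range (T : ↥l₂ →ₗ[ℝ] ↥(l₁ᗮ))) = Module.rank ℝ (H ⧸ (l₁ ⊔ l₂)) ∧
    (IsFredholmPair l₁ l₂ →
      (Module.finrank ℝ ↥(LinearMap.ker (T : ↥l₂ →ₗ[ℝ] ↥(l₁ᗮ))) : ℤ)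
          - (Module.finrank ℝ (↥(l₁ᗮ) ⧸ LinearMap.range (T : ↥l₂ →ₗ[ℝ] ↥(l₁ᗮ))) : ℤ)
        = (Module.finrank ℝ ↥(l₁ ⊓ l₂) : ℤ)
          - (Module.finrank ℝ (H ⧸ (l₁ ⊔ l₂)) : ℤ)) :=
  fredholmPair_iff_projection_restriction_fredholm_general l₁ l₂ hl₁ P₁ hPsa hPidem hPrange T hT
end

section
/- Assume H is infinite-dimensional and let λ be a Lagrangian subspace of H. Then (λ, λ) is not a Fredholm pair, but for every ε > 0 there exists a Lagrangian subspace μ of H such that (μ, λ) is a Fredholm pair (indeed μ ∩ λ = {0} and μ + λ = H) and ‖P_μ − P_λ‖ < ε. In other words, λ lies in the closure of the Fredholm–Lagrangian–Grassmannian FΛ_λ(H) but not in FΛ_λ(H). -/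
open scoped RealInnerProductSpace

/-!
The rotations `R_θ = cos θ + sin θ J` are orthogonal and commute with `J`, so they preserve `ω` and
carry `λ` to Lagrangians `R_θ λ` whose projections `R_θ P_λ R_θ⁻¹` tend to `P_λ` as `θ → 0`. For
`sin θ ≠ 0` the subspace `R_θ λ` is transversal to `λ`: `J` is expressed through `R_θ` and the
identity, so `R_θ w ∈ λ` for `w ∈ λ` forces `J w ∈ λ`, hence `w = 0` by isotropy, while
`H = λ ⊕ λ^⊥ = λ + J λ ⊆ R_θ λ + λ`. On the other hand `(λ, λ)` being Fredholm would make both `λ`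
and `H ⧸ λ` finite-dimensional.
-/

open scoped InnerProductSpace

theorem finiteDimensional_of_isFredholmPair_self {H : Type*} [NormedAddCommGroup H]
    [InnerProductSpace ℝ H] {μ : Submodule ℝ H} (h : IsFredholmPair μ μ) :
    FiniteDimensional ℝ H := by
  obtain ⟨hfin, -, hquot⟩ := h
  rw [inf_idem] at hfin
  rw [sup_idem] at hquot
  exact Module.Finite.of_submodule_quotient μ

theorem isFredholmPair_of_isCompl {H : Type*} [NormedAddCommGroup H] [InnerProductSpace ℝ H]
    {μ ν : Submodule ℝ H} (h : IsCompl μ ν) : IsFredholmPair μ ν := by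
  refine ⟨?_, ?_, ?_⟩
  · rw [h.inf_eq_bot]; infer_instance
  · rw [h.sup_eq_top, Submodule.top_coe]; exact isClosed_univ
  · rw [h.sup_eq_top]; infer_instance

theorem exists_hasOrthogonalProjection_eq_starProjection {𝕜 E : Type*} [RCLike 𝕜]
    [NormedAddCommGroup E] [InnerProductSpace 𝕜 E] {P : E →L[𝕜] E} {K : Submodule 𝕜 E}
    (hsymm : ∀ x y, ⟪P x, y⟫_𝕜 = ⟪x, P y⟫_𝕜) (hidem : P.comp P = P)
    (hrange : LinearMap.range (P : E →ₗ[𝕜] E) = K) :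
    ∃ _ : K.HasOrthogonalProjection, P = K.starProjection := by
  subst hrange
  obtain ⟨_, hP⟩ := LinearMap.isSymmetricProjection_iff_eq_coe_starProjection_range.mp
    ⟨ContinuousLinearMap.IsIdempotentElem.toLinearMap hidem, hsymm⟩
  exact ⟨‹_›, ContinuousLinearMap.coe_injective hP⟩

theorem norm_starProjection_map_sub_le {𝕜 E : Type*} [RCLike 𝕜] [NormedAddCommGroup E]
    [InnerProductSpace 𝕜 E] (e : E ≃ₗᵢ[𝕜] E) (K : Submodule 𝕜 E) [K.HasOrthogonalProjection]
    {δ : ℝ} (hδ : 0 ≤ δ) (he : ∀ x, ‖e x - x‖ ≤ δ * ‖x‖) :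
    ‖(K.map (e.toLinearEquiv : E →ₗ[𝕜] E)).starProjection - K.starProjection‖ ≤ 2 * δ := by
  refine ContinuousLinearMap.opNorm_le_bound _ (by positivity) fun x => ?_
  rw [sub_apply, Submodule.starProjection_map_apply]
  set P := K.starProjection
  have he_symm : ‖e.symm x - x‖ ≤ δ * ‖x‖ := by
    rw [← e.norm_map, map_sub, e.apply_symm_apply, norm_sub_rev]
    exact he x
  calc ‖e (P (e.symm x)) - P x‖ = ‖(e (P (e.symm x)) - P (e.symm x)) + P (e.symm x - x)‖ := by
        rw [map_sub]; abel_nf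
    _ ≤ δ * ‖P (e.symm x)‖ + δ * ‖x‖ :=
        (norm_add_le _ _).trans
          (add_le_add (he _) ((K.norm_starProjection_apply_le _).trans he_symm))
    _ ≤ δ * ‖x‖ + δ * ‖x‖ := by
        gcongr
        exact (K.norm_starProjection_apply_le _).trans_eq (e.symm.norm_map x)
    _ = 2 * δ * ‖x‖ := by ring

section Symplectic

variable {H : Type*} [NormedAddCommGroup H] [InnerProductSpace ℝ H] {J : H →L[ℝ] H}

theorem omegaAnn_image {f : H → H} (hf : Function.Surjective f)
    (hω : ∀ x y, ⟪J (f x), f y⟫ = ⟪J x, y⟫) (s : Set H) :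
    omegaAnn J (f '' s) = f '' omegaAnn J s := by
  ext x
  constructor
  · intro hx
    obtain ⟨x, rfl⟩ := hf x
    exact ⟨x, fun y hy => (hω x y).symm.trans (hx _ ⟨y, hy, rfl⟩), rfl⟩
  · rintro ⟨x, hx, rfl⟩ _ ⟨y, hy, rfl⟩
    rw [hω]
    exact hx y hy

theorem eq_zero_of_mem_of_apply_mem_of_subset_omegaAnn (hJ2 : ∀ x, J (J x) = -x)
    {lam : Submodule ℝ H} (hiso : (lam : Set H) ⊆ omegaAnn J (lam : Set H)) {w : H}
    (hw : w ∈ lam) (hJw : J w ∈ lam) : w = 0 := by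
  have hJw0 : J w = 0 := inner_self_eq_zero.mp (hiso hw _ hJw)
  simpa [hJw0] using (hJ2 w).symm

theorem orthogonal_le_map_of_omegaAnn_subset (hJ2 : ∀ x, J (J x) = -x) {lam : Submodule ℝ H}
    (hcoiso : omegaAnn J (lam : Set H) ⊆ lam) : lamᗮ ≤ lam.map (J : H →ₗ[ℝ] H) := by
  intro x hx
  refine ⟨J (-x), hcoiso fun y hy => ?_, by simp [hJ2]⟩
  rw [hJ2, neg_neg, real_inner_comm]
  exact hx y hy

theorem sup_map_eq_top_of_omegaAnn_subset (hJ2 : ∀ x, J (J x) = -x) {lam : Submodule ℝ H}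
    [lam.HasOrthogonalProjection] (hcoiso : omegaAnn J (lam : Set H) ⊆ lam) :
    lam ⊔ lam.map (J : H →ₗ[ℝ] H) = ⊤ :=
  top_le_iff.mp (Submodule.sup_orthogonal_of_hasOrthogonalProjection (K := lam) ▸
    sup_le_sup_left (orthogonal_le_map_of_omegaAnn_subset hJ2 hcoiso) lam)

end Symplectic

section Rotation

variable {H : Type*} [NormedAddCommGroup H] [InnerProductSpace ℝ H] {J : H →L[ℝ] H}

noncomputable def jRotation (J : H →L[ℝ] H) (θ : ℝ) : H →L[ℝ] H :=
  Real.cos θ • ContinuousLinearMap.id ℝ H + Real.sin θ • J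

@[simp]
theorem jRotation_apply (θ : ℝ) (x : H) :
    jRotation J θ x = Real.cos θ • x + Real.sin θ • J x :=
  rfl

theorem apply_jRotation (θ : ℝ) (x : H) : J (jRotation J θ x) = jRotation J θ (J x) := by
  simp

theorem jRotation_jRotation (hJ2 : ∀ x, J (J x) = -x) (θ φ : ℝ) (x : H) :
    jRotation J θ (jRotation J φ x) = jRotation J (θ + φ) x := by
  simp only [jRotation_apply, map_add, map_smul, hJ2, Real.cos_add, Real.sin_add]
  module

theorem jRotation_zero (x : H) : jRotation J 0 x = x := by
  simp

theorem inner_apply_self_eq_zero_of_inner_map_map (hJ2 : ∀ x, J (J x) = -x)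
    (hJorth : ∀ x y, ⟪J x, J y⟫ = ⟪x, y⟫) (x : H) : ⟪J x, x⟫ = 0 := by
  have h := hJorth x (J x)
  rw [hJ2, inner_neg_right] at h
  linarith [real_inner_comm x (J x)]

theorem norm_apply_eq_of_inner_map_map (hJorth : ∀ x y, ⟪J x, J y⟫ = ⟪x, y⟫) (x : H) :
    ‖J x‖ = ‖x‖ := by
  rw [norm_eq_sqrt_real_inner, hJorth, ← norm_eq_sqrt_real_inner]

theorem norm_jRotation (hJ2 : ∀ x, J (J x) = -x) (hJorth : ∀ x y, ⟪J x, J y⟫ = ⟪x, y⟫)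
    (θ : ℝ) (x : H) : ‖jRotation J θ x‖ = ‖x‖ := by
  have h : ‖jRotation J θ x‖ ^ 2 = ‖x‖ ^ 2 := by
    rw [jRotation_apply, norm_add_sq_real, norm_smul, norm_smul, real_inner_smul_left,
      real_inner_smul_right, real_inner_comm, inner_apply_self_eq_zero_of_inner_map_map hJ2 hJorth,
      norm_apply_eq_of_inner_map_map hJorth, Real.norm_eq_abs, Real.norm_eq_abs]
    nlinarith [Real.cos_sq_add_sin_sq θ, sq_abs (Real.cos θ), sq_abs (Real.sin θ)]
  exact (sq_eq_sq₀ (norm_nonneg _) (norm_nonneg _)).mp h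

noncomputable def jRotationEquiv (hJ2 : ∀ x, J (J x) = -x)
    (hJorth : ∀ x y, ⟪J x, J y⟫ = ⟪x, y⟫) (θ : ℝ) : H ≃ₗᵢ[ℝ] H :=
  LinearIsometryEquiv.ofSurjective ⟨jRotation J θ, norm_jRotation hJ2 hJorth θ⟩ fun x =>
    ⟨jRotation J (-θ) x, by
      change jRotation J θ (jRotation J (-θ) x) = x
      rw [jRotation_jRotation hJ2, add_neg_cancel, jRotation_zero]⟩

@[simp]
theorem jRotationEquiv_apply (hJ2 : ∀ x, J (J x) = -x)
    (hJorth : ∀ x y, ⟪J x, J y⟫ = ⟪x, y⟫) (θ : ℝ) (x : H) :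
    jRotationEquiv hJ2 hJorth θ x = jRotation J θ x :=
  rfl

theorem apply_eq_smul_jRotation_sub {θ : ℝ} (hθ : Real.sin θ ≠ 0) (x : H) :
    J x = (Real.sin θ)⁻¹ • (jRotation J θ x - Real.cos θ • x) := by
  rw [jRotation_apply, add_sub_cancel_left, inv_smul_smul₀ hθ]

theorem norm_jRotation_sub_self_le (hJorth : ∀ x y, ⟪J x, J y⟫ = ⟪x, y⟫) (θ : ℝ) (x : H) :
    ‖jRotation J θ x - x‖ ≤ 2 * |θ| * ‖x‖ := by
  have hcos : |Real.cos θ - 1| ≤ |θ| := by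
    simpa using Real.abs_cos_sub_cos_le θ 0
  calc ‖jRotation J θ x - x‖ = ‖(Real.cos θ - 1) • x + Real.sin θ • J x‖ := by
        rw [jRotation_apply, sub_smul, one_smul]; abel_nf
    _ ≤ |Real.cos θ - 1| * ‖x‖ + |Real.sin θ| * ‖x‖ := by
        grw [norm_add_le, norm_smul, norm_smul, norm_apply_eq_of_inner_map_map hJorth,
          Real.norm_eq_abs, Real.norm_eq_abs]
    _ ≤ |θ| * ‖x‖ + |θ| * ‖x‖ := by
        gcongr ?_ * _ + ?_ * _
        exact Real.abs_sin_le_abs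
    _ = 2 * |θ| * ‖x‖ := by ring

end Rotation

section RotatedLagrangian

variable {H : Type*} [NormedAddCommGroup H] [InnerProductSpace ℝ H] {J : H →L[ℝ] H}
  {lam : Submodule ℝ H}

theorem omegaAnn_map_jRotationEquiv (hJ2 : ∀ x, J (J x) = -x)
    (hJorth : ∀ x y, ⟪J x, J y⟫ = ⟪x, y⟫) (hlam : omegaAnn J (lam : Set H) = lam) (θ : ℝ) :
    omegaAnn J (lam.map ((jRotationEquiv hJ2 hJorth θ).toLinearEquiv : H →ₗ[ℝ] H) : Set H) =
      lam.map ((jRotationEquiv hJ2 hJorth θ).toLinearEquiv : H →ₗ[ℝ] H) := by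
  set e := jRotationEquiv hJ2 hJorth θ
  have hω : ∀ x y, ⟪J (e x), e y⟫ = ⟪J x, y⟫ := fun x y => by
    rw [jRotationEquiv_apply, apply_jRotation, ← jRotationEquiv_apply hJ2 hJorth, e.inner_map_map]
  rw [Submodule.map_coe]
  exact (omegaAnn_image e.surjective hω _).trans (congrArg _ hlam)

theorem isCompl_map_jRotationEquiv (hJ2 : ∀ x, J (J x) = -x)
    (hJorth : ∀ x y, ⟪J x, J y⟫ = ⟪x, y⟫) (hlam : omegaAnn J (lam : Set H) = lam)
    [lam.HasOrthogonalProjection] {θ : ℝ} (hθ : Real.sin θ ≠ 0) :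
    IsCompl (lam.map ((jRotationEquiv hJ2 hJorth θ).toLinearEquiv : H →ₗ[ℝ] H)) lam := by
  constructor
  · rw [Submodule.disjoint_def]
    rintro _ ⟨w, hw, rfl⟩ hRw
    change jRotation J θ w ∈ lam at hRw
    have hJw : J w ∈ lam := by
      rw [apply_eq_smul_jRotation_sub hθ]
      exact lam.smul_mem _ (lam.sub_mem hRw (lam.smul_mem _ hw))
    simp [eq_zero_of_mem_of_apply_mem_of_subset_omegaAnn hJ2 hlam.superset hw hJw]
  · rw [codisjoint_iff, eq_top_iff, ← sup_map_eq_top_of_omegaAnn_subset hJ2 hlam.subset]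
    refine sup_le le_sup_right ?_
    rintro _ ⟨b, hb, rfl⟩
    change J b ∈ _
    rw [apply_eq_smul_jRotation_sub hθ]
    exact Submodule.smul_mem _ _ (Submodule.sub_mem _ (Submodule.mem_sup_left ⟨b, hb, rfl⟩)
      (Submodule.mem_sup_right (lam.smul_mem _ hb)))

end RotatedLagrangian

theorem lagrangian_in_boundary_of_FredholmLagrangianGrassmannian_general
    {H : Type*} [NormedAddCommGroup H] [InnerProductSpace ℝ H]
    (hinf : ¬ FiniteDimensional ℝ H)
    (J : H →L[ℝ] H) (hJ2 : ∀ x : H, J (J x) = -x)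
    (hJorth : ∀ x y : H, ⟪J x, J y⟫ = ⟪x, y⟫)
    (lam : Submodule ℝ H) (hlam : omegaAnn J (lam : Set H) = (lam : Set H))
    (Pl : H →L[ℝ] H)
    (hPlsa : ∀ x y : H, ⟪Pl x, y⟫ = ⟪x, Pl y⟫) (hPlidem : Pl.comp Pl = Pl)
    (hPlrange : LinearMap.range (Pl : H →ₗ[ℝ] H) = lam) :
    ¬ IsFredholmPair lam lam ∧
    ∀ ε : ℝ, 0 < ε →
      ∃ μ : Submodule ℝ H, omegaAnn J (μ : Set H) = (μ : Set H) ∧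
        μ ⊓ lam = ⊥ ∧ μ ⊔ lam = ⊤ ∧ IsFredholmPair μ lam ∧
        ∃ Pμ : H →L[ℝ] H, (∀ x y : H, ⟪Pμ x, y⟫ = ⟪x, Pμ y⟫) ∧
          Pμ.comp Pμ = Pμ ∧ LinearMap.range (Pμ : H →ₗ[ℝ] H) = μ ∧ ‖Pμ - Pl‖ < ε := by
  refine ⟨fun h => hinf (finiteDimensional_of_isFredholmPair_self h), fun ε hε => ?_⟩
  obtain ⟨_, rfl⟩ := exists_hasOrthogonalProjection_eq_starProjection hPlsa hPlidem hPlrange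
  obtain ⟨θ, hθ0, hθ⟩ : ∃ θ, 0 < θ ∧ θ < min (ε / 4) 1 := exists_between (by positivity)
  have hsin : Real.sin θ ≠ 0 := (Real.sin_pos_of_pos_of_lt_pi hθ0
    (by linarith [Real.pi_gt_three, min_le_right (ε / 4) 1])).ne'
  set e := jRotationEquiv hJ2 hJorth θ
  set μ := lam.map (e.toLinearEquiv : H →ₗ[ℝ] H)
  have hcompl : IsCompl μ lam := isCompl_map_jRotationEquiv hJ2 hJorth hlam hsin
  have hnear : ‖μ.starProjection - lam.starProjection‖ ≤ 2 * (2 * θ) :=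
    norm_starProjection_map_sub_le e lam (by positivity) fun x =>
      (norm_jRotation_sub_self_le hJorth θ x).trans_eq (by rw [abs_of_pos hθ0])
  refine ⟨μ, omegaAnn_map_jRotationEquiv hJ2 hJorth hlam θ, hcompl.inf_eq_bot,
    hcompl.sup_eq_top, isFredholmPair_of_isCompl hcompl, μ.starProjection,
    μ.starProjection_isSymmetric, μ.isIdempotentElem_starProjection, μ.range_starProjection,
    hnear.trans_lt ?_⟩
  linarith [min_le_left (ε / 4) 1]

/-- In infinite dimensions, a Lagrangian `λ` is not in `FΛ_λ(H)` (since `(λ, λ)` is not a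
Fredholm pair), but it is in the closure: there are Lagrangians `μ` transversal to `λ`
(hence forming a Fredholm pair with `λ`) whose projections are arbitrarily norm-close
to the projection onto `λ`. -/
theorem lagrangian_in_boundary_of_FredholmLagrangianGrassmannian
    {H : Type*} [NormedAddCommGroup H] [InnerProductSpace ℝ H] [CompleteSpace H]
    (hinf : ¬ FiniteDimensional ℝ H)
    (J : H →L[ℝ] H) (hJ2 : ∀ x : H, J (J x) = -x)
    (hJorth : ∀ x y : H, ⟪J x, J y⟫ = ⟪x, y⟫)
    (lam : Submodule ℝ H) (hlam : omegaAnn J (lam : Set H) = (lam : Set H))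
    (Pl : H →L[ℝ] H)
    (hPlsa : ∀ x y : H, ⟪Pl x, y⟫ = ⟪x, Pl y⟫) (hPlidem : Pl.comp Pl = Pl)
    (hPlrange : LinearMap.range (Pl : H →ₗ[ℝ] H) = lam) :
    ¬ IsFredholmPair lam lam ∧
    ∀ ε : ℝ, 0 < ε →
      ∃ μ : Submodule ℝ H, omegaAnn J (μ : Set H) = (μ : Set H) ∧
        μ ⊓ lam = ⊥ ∧ μ ⊔ lam = ⊤ ∧ IsFredholmPair μ lam ∧
        ∃ Pμ : H →L[ℝ] H, (∀ x y : H, ⟪Pμ x, y⟫ = ⟪x, Pμ y⟫) ∧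
          Pμ.comp Pμ = Pμ ∧ LinearMap.range (Pμ : H →ₗ[ℝ] H) = μ ∧ ‖Pμ - Pl‖ < ε :=
  lagrangian_in_boundary_of_FredholmLagrangianGrassmannian_general hinf J hJ2 hJorth lam hlam Pl
    hPlsa hPlidem hPlrange
end

section
/- Let λ and μ be Lagrangian subspaces of H that almost coincide, i.e., the quotient λ / (λ ∩ μ) is finite-dimensional. Then there exists a bijective isometric linear map U : H → H with U ∘ J = J ∘ U such that U − Id has finite rank and U(λ) = μ. -/
open scoped RealInnerProductSpace

/-!
Lagrangians are closed and satisfy `J λ = λᗮ`. With `ν = λ ∩ μ` and `F = νᗮ ∩ λ`, the space splits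
orthogonally as `H = λ ⊕ J λ = (ν ⊕ J ν) ⊕ (F ⊕ J F)`, so `F ⊕ J F = (ν ⊕ J ν)ᗮ`; the same holds for
`G = νᗮ ∩ μ`, hence `F ⊕ J F = G ⊕ J G =: W`. Since `F` embeds into `λ / (λ ∩ μ)` it is finite
dimensional, and `dim F = dim W / 2 = dim G`. Orthonormal bases `e` of `F` and `f` of `G` give real
orthonormal bases `(e, J e)` and `(f, J f)` of `W`; the operator taking the first to the second
and fixing `Wᗮ ⊇ ν` is unitary, commutes with `J`, differs from the identity only on `W`, and maps
`λ = ν ⊕ F` onto `ν ⊕ G = μ`.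
-/

open Submodule Set

section

variable {H : Type*} [NormedAddCommGroup H] [InnerProductSpace ℝ H]

lemma inner_add_add_of_mem_orthogonal {K : Submodule ℝ H} {a a' b b' : H} (ha : a ∈ Kᗮ)
    (ha' : a' ∈ Kᗮ) (hb : b ∈ K) (hb' : b' ∈ K) : ⟪a + b, a' + b'⟫ = ⟪a, a'⟫ + ⟪b, b'⟫ := by
  rw [inner_add_left, inner_add_right, inner_add_right, inner_left_of_mem_orthogonal hb' ha,
    inner_right_of_mem_orthogonal hb ha', add_zero, zero_add]

lemma orthogonal_eq_of_sup_eq_top {V K : Submodule ℝ H} (hK : K ≤ Vᗮ) (h : V ⊔ K = ⊤) :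
    Vᗮ = K := by
  rw [← top_inf_eq Vᗮ, ← h, sup_comm, sup_inf_assoc_of_le V hK,
    inf_orthogonal_eq_bot, sup_bot_eq]

lemma finiteDimensional_orthogonal_inf {L M : Submodule ℝ H}
    [FiniteDimensional ℝ (L ⧸ M.comap L.subtype)] :
    FiniteDimensional ℝ ↥((L ⊓ M)ᗮ ⊓ L) := by
  refine FiniteDimensional.of_injective ((M.comap L.subtype).mkQ ∘ₗ inclusion inf_le_right) ?_
  rw [← LinearMap.ker_eq_bot, eq_bot_iff]
  rintro ⟨x, hxν, hxL⟩ hx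
  have hxM : x ∈ M := by simpa using hx
  exact (mem_bot ℝ).2 (Subtype.ext (inner_self_eq_zero.mp
    (inner_right_of_mem_orthogonal (mem_inf.2 ⟨hxL, hxM⟩) hxν)))

lemma exists_orthonormal_span_eq (F : Submodule ℝ H) [FiniteDimensional ℝ F] {n : ℕ}
    (hn : Module.finrank ℝ F = n) :
    ∃ e : Fin n → H, Orthonormal ℝ e ∧ span ℝ (range e) = F := by
  let b := (stdOrthonormalBasis ℝ F).reindex (finCongr hn)
  refine ⟨F.subtype ∘ b, b.orthonormal.comp_linearIsometry F.subtypeₗᵢ, ?_⟩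
  rw [range_comp, ← map_span, ← b.coe_toBasis, b.toBasis.span_eq, map_subtype_top]

section FrameChange

variable {ι : Type*} [Fintype ι] {e f : ι → H}

lemma sub_sum_inner_smul_mem_orthogonal (he : Orthonormal ℝ e) (x : H) :
    x - ∑ k, ⟪e k, x⟫ • e k ∈ (span ℝ (range e))ᗮ := by
  rw [mem_orthogonal]
  intro u hu
  induction hu using span_induction with
  | mem u hu =>
    obtain ⟨k, rfl⟩ := hu
    rw [inner_sub_right, he.inner_right_fintype, sub_self]
  | zero => exact inner_zero_left _
  | add a b _ _ ha hb => rw [inner_add_left, ha, hb, add_zero]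
  | smul r a _ ha => rw [real_inner_smul_left, ha, mul_zero]

variable (e f) in
/-- For orthonormal `e`, this sends `e k` to `f k` and fixes `(span (range e))ᗮ` pointwise. -/
noncomputable def frameChange : H →L[ℝ] H :=
  1 + ∑ k, (innerSL ℝ (e k)).smulRight (f k - e k)

lemma frameChange_apply (x : H) : frameChange e f x = x + ∑ k, ⟪e k, x⟫ • (f k - e k) := by
  simp [frameChange]

lemma frameChange_apply_eq_sub_add (x : H) :
    frameChange e f x = (x - ∑ k, ⟪e k, x⟫ • e k) + ∑ k, ⟪e k, x⟫ • f k := by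
  rw [frameChange_apply]
  simp only [smul_sub, Finset.sum_sub_distrib]
  abel

lemma frameChange_apply_of_mem_orthogonal {x : H} (hx : x ∈ (span ℝ (range e))ᗮ) :
    frameChange e f x = x := by
  have : ∀ k, ⟪e k, x⟫ = 0 := fun k =>
    inner_right_of_mem_orthogonal (subset_span (mem_range_self k)) hx
  simp [frameChange_apply, this]

lemma frameChange_apply_self (he : Orthonormal ℝ e) (k : ι) :
    frameChange e f (e k) = f k := by
  classical
  simp [frameChange_apply, orthonormal_iff_ite.mp he]

lemma finiteDimensional_range_frameChange_sub_one :
    FiniteDimensional ℝ ↥(LinearMap.range ((frameChange e f - 1 : H →L[ℝ] H) : H →ₗ[ℝ] H)) := by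
  have hle : LinearMap.range ((frameChange e f - 1 : H →L[ℝ] H) : H →ₗ[ℝ] H) ≤
      span ℝ (range fun k => f k - e k) := by
    rintro _ ⟨x, rfl⟩
    have : (frameChange e f - 1) x = ∑ k, ⟪e k, x⟫ • (f k - e k) := by
      simp [frameChange_apply]
    rw [ContinuousLinearMap.coe_coe, this]
    exact sum_mem fun k _ => smul_mem _ _ (subset_span (mem_range_self k))
  have := FiniteDimensional.span_of_finite ℝ (finite_range fun k => f k - e k)
  exact Submodule.finiteDimensional_of_le hle

lemma inner_frameChange_frameChange (he : Orthonormal ℝ e) (hf : Orthonormal ℝ f)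
    (hspan : span ℝ (range f) = span ℝ (range e)) (x y : H) :
    ⟪frameChange e f x, frameChange e f y⟫ = ⟪x, y⟫ := by
  have hmem : ∀ (g : ι → H) (z : H), ∑ k, ⟪e k, z⟫ • g k ∈ span ℝ (range g) := fun g z =>
    sum_mem fun k _ => smul_mem _ _ (subset_span (mem_range_self k))
  have hx := sub_sum_inner_smul_mem_orthogonal he x
  have hy := sub_sum_inner_smul_mem_orthogonal he y
  calc ⟪frameChange e f x, frameChange e f y⟫
      = ⟪x - ∑ k, ⟪e k, x⟫ • e k, y - ∑ k, ⟪e k, y⟫ • e k⟫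
          + ⟪∑ k, ⟪e k, x⟫ • f k, ∑ k, ⟪e k, y⟫ • f k⟫ := by
        rw [frameChange_apply_eq_sub_add, frameChange_apply_eq_sub_add,
          inner_add_add_of_mem_orthogonal hx hy (hspan ▸ hmem f x) (hspan ▸ hmem f y)]
    _ = ⟪x - ∑ k, ⟪e k, x⟫ • e k, y - ∑ k, ⟪e k, y⟫ • e k⟫
          + ⟪∑ k, ⟪e k, x⟫ • e k, ∑ k, ⟪e k, y⟫ • e k⟫ := by
        rw [hf.inner_sum, he.inner_sum]
    _ = ⟪x, y⟫ := by
        rw [← inner_add_add_of_mem_orthogonal hx hy (hmem e x) (hmem e y), sub_add_cancel,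
          sub_add_cancel]

lemma frameChange_frameChange_swap (he : Orthonormal ℝ e) (hf : Orthonormal ℝ f)
    (hspan : span ℝ (range f) = span ℝ (range e)) (x : H) :
    frameChange e f (frameChange f e x) = x := by
  have hfix := frameChange_apply_of_mem_orthogonal (f := f)
    (hspan ▸ sub_sum_inner_smul_mem_orthogonal hf x)
  rw [frameChange_apply_eq_sub_add (e := f) (f := e), map_add, hfix, map_sum]
  simp only [map_smul, frameChange_apply_self he]
  abel

lemma frameChange_bijective (he : Orthonormal ℝ e) (hf : Orthonormal ℝ f)
    (hspan : span ℝ (range f) = span ℝ (range e)) : Function.Bijective (frameChange e f) :=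
  ⟨(LinearMap.isometryOfInner _ (inner_frameChange_frameChange he hf hspan)).injective,
    fun y => ⟨frameChange f e y, frameChange_frameChange_swap he hf hspan y⟩⟩

lemma map_frameChange_of_le_orthogonal {K : Submodule ℝ H}
    (hK : K ≤ (span ℝ (range e))ᗮ) : K.map (frameChange e f : H →ₗ[ℝ] H) = K := by
  ext x
  constructor
  · rintro ⟨y, hy, rfl⟩
    simpa [frameChange_apply_of_mem_orthogonal (hK hy)] using hy
  · exact fun hx => ⟨x, hx, frameChange_apply_of_mem_orthogonal (hK hx)⟩

lemma map_frameChange_span_range_comp (he : Orthonormal ℝ e) {κ : Type*}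
    (g : κ → ι) :
    (span ℝ (range (e ∘ g))).map (frameChange e f : H →ₗ[ℝ] H) = span ℝ (range (f ∘ g)) := by
  rw [map_span, ← range_comp]
  congr 2
  ext k
  exact frameChange_apply_self he (g k)

end FrameChange

section ComplexStructure

variable {J : H →L[ℝ] H}

lemma omegaAnn_eq_comap_orthogonal (L : Submodule ℝ H) :
    omegaAnn J L = ((Lᗮ).comap (J : H →ₗ[ℝ] H) : Set H) := by
  ext x
  simp [omegaAnn, mem_orthogonal']

lemma isClosed_of_omegaAnn_eq {L : Submodule ℝ H} (hL : omegaAnn J L = L) :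
    IsClosed (L : Set H) := by
  rw [← hL, omegaAnn_eq_comap_orthogonal]
  exact (isClosed_orthogonal L).preimage J.continuous

lemma map_eq_orthogonal_of_omegaAnn_eq (hJ2 : ∀ x, J (J x) = -x) {L : Submodule ℝ H}
    (hL : omegaAnn J L = L) : L.map (J : H →ₗ[ℝ] H) = Lᗮ := by
  have hcomap : (Lᗮ).comap (J : H →ₗ[ℝ] H) = L :=
    SetLike.coe_injective ((omegaAnn_eq_comap_orthogonal L).symm.trans hL)
  have hJsurj : Function.Surjective J := fun y => ⟨-J y, by rw [map_neg, hJ2, neg_neg]⟩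
  calc L.map (J : H →ₗ[ℝ] H) = ((Lᗮ).comap (J : H →ₗ[ℝ] H)).map (J : H →ₗ[ℝ] H) := by
        rw [hcomap]
    _ = Lᗮ := map_comap_eq_of_surjective hJsurj _

lemma inner_apply_right_eq_neg (hJ2 : ∀ x, J (J x) = -x) (hJorth : ∀ x y, ⟪J x, J y⟫ = ⟪x, y⟫)
    (x y : H) : ⟪x, J y⟫ = -⟪J x, y⟫ := by
  rw [← hJorth x (J y), hJ2, inner_neg_right]

lemma map_orthogonal_le_orthogonal_map (hJorth : ∀ x y, ⟪J x, J y⟫ = ⟪x, y⟫)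
    (K : Submodule ℝ H) : (Kᗮ).map (J : H →ₗ[ℝ] H) ≤ (K.map (J : H →ₗ[ℝ] H))ᗮ := by
  rintro _ ⟨x, hx, rfl⟩
  rw [mem_orthogonal]
  rintro _ ⟨y, hy, rfl⟩
  exact (hJorth y x).trans (inner_right_of_mem_orthogonal hy hx)

lemma sup_map_orthogonal_inf_eq (hJorth : ∀ x y, ⟪J x, J y⟫ = ⟪x, y⟫)
    {L ν : Submodule ℝ H} [L.HasOrthogonalProjection] [ν.HasOrthogonalProjection]
    (hL : L.map (J : H →ₗ[ℝ] H) = Lᗮ) (hνL : ν ≤ L) :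
    (νᗮ ⊓ L) ⊔ (νᗮ ⊓ L).map (J : H →ₗ[ℝ] H) = (ν ⊔ ν.map (J : H →ₗ[ℝ] H))ᗮ := by
  have hJνL : ν.map (J : H →ₗ[ℝ] H) ≤ Lᗮ := hL ▸ map_mono hνL
  refine (orthogonal_eq_of_sup_eq_top ?_ ?_).symm
  · rw [← inf_orthogonal]
    refine sup_le (le_inf inf_le_left ?_) (le_inf ?_ ?_)
    · exact inf_le_right.trans ((le_orthogonal_orthogonal L).trans (orthogonal_le hJνL))
    · exact (map_mono inf_le_right).trans (hL.trans_le (orthogonal_le hνL))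
    · exact (map_mono inf_le_left).trans (map_orthogonal_le_orthogonal_map hJorth ν)
  · rw [sup_sup_sup_comm, ← Submodule.map_sup, sup_orthogonal_inf_of_hasOrthogonalProjection hνL,
      hL, sup_orthogonal_of_hasOrthogonalProjection]

lemma finrank_sup_map (hJ : Function.Injective J) {F L : Submodule ℝ H} [FiniteDimensional ℝ F]
    (hL : L.map (J : H →ₗ[ℝ] H) = Lᗮ) (hFL : F ≤ L) :
    Module.finrank ℝ ↥(F ⊔ F.map (J : H →ₗ[ℝ] H)) = 2 * Module.finrank ℝ F := by
  have hdisj : F ⊓ F.map (J : H →ₗ[ℝ] H) = ⊥ :=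
    eq_bot_iff.2 ((inf_le_inf hFL (hL ▸ map_mono hFL)).trans (inf_orthogonal_eq_bot L).le)
  have hmap : Module.finrank ℝ (F.map (J : H →ₗ[ℝ] H)) = Module.finrank ℝ F :=
    (equivMapOfInjective (J : H →ₗ[ℝ] H) hJ F).finrank_eq.symm
  have := finrank_sup_add_finrank_inf_eq F (F.map (J : H →ₗ[ℝ] H))
  rw [hdisj, finrank_bot, hmap] at this
  omega

lemma finrank_eq_of_sup_map_eq (hJ : Function.Injective J) {F G L M : Submodule ℝ H}
    [FiniteDimensional ℝ F] [FiniteDimensional ℝ G] (hL : L.map (J : H →ₗ[ℝ] H) = Lᗮ)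
    (hM : M.map (J : H →ₗ[ℝ] H) = Mᗮ) (hFL : F ≤ L) (hGM : G ≤ M)
    (h : F ⊔ F.map (J : H →ₗ[ℝ] H) = G ⊔ G.map (J : H →ₗ[ℝ] H)) :
    Module.finrank ℝ G = Module.finrank ℝ F := by
  have hF := finrank_sup_map hJ hL hFL
  have hG := finrank_sup_map hJ hM hGM
  rw [h] at hF
  omega

variable {ι : Type*}

variable (J) in
def jFrame (e : ι → H) : ι ⊕ ι → H :=
  Sum.elim e fun i => J (e i)

lemma span_range_jFrame (e : ι → H) :
    span ℝ (range (jFrame J e)) =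
      span ℝ (range e) ⊔ (span ℝ (range e)).map (J : H →ₗ[ℝ] H) := by
  rw [jFrame, Sum.elim_range, span_union, map_span, ← range_comp]
  rfl

lemma orthonormal_jFrame (hJorth : ∀ x y, ⟪J x, J y⟫ = ⟪x, y⟫) {L : Submodule ℝ H}
    (hL : L.map (J : H →ₗ[ℝ] H) = Lᗮ) {e : ι → H} (he : Orthonormal ℝ e)
    (heL : span ℝ (range e) ≤ L) : Orthonormal ℝ (jFrame J e) := by
  classical
  have hmem : ∀ i, e i ∈ L := fun i => heL (subset_span (mem_range_self i))
  have hcross : ∀ i j, ⟪e i, J (e j)⟫ = 0 := fun i j =>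
    inner_right_of_mem_orthogonal (hmem i) (hL ▸ mem_map_of_mem (hmem j))
  rw [orthonormal_iff_ite] at he ⊢
  rintro (i | i) (j | j)
  · simpa [jFrame] using he i j
  · simpa [jFrame] using hcross i j
  · simpa [jFrame, real_inner_comm] using hcross j i
  · simpa [jFrame, hJorth] using he i j

lemma frameChange_jFrame_apply (hJ2 : ∀ x, J (J x) = -x)
    (hJorth : ∀ x y, ⟪J x, J y⟫ = ⟪x, y⟫) [Fintype ι] (e f : ι → H) (x : H) :
    frameChange (jFrame J e) (jFrame J f) (J x) = J (frameChange (jFrame J e) (jFrame J f) x) := by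
  simp only [frameChange_apply, Fintype.sum_sum_type, jFrame, Sum.elim_inl, Sum.elim_inr,
    inner_apply_right_eq_neg hJ2 hJorth, inner_neg_left, neg_neg, map_add, map_sum, map_smul,
    map_sub, hJ2]
  rw [add_comm (∑ i, _ • (f i - e i))]
  congr 2
  exact Finset.sum_congr rfl fun i _ => by module

theorem exists_frameChange_jFrame_map_eq (hJ : Function.Injective J)
    (hJorth : ∀ x y, ⟪J x, J y⟫ = ⟪x, y⟫) {L M : Submodule ℝ H} [L.HasOrthogonalProjection]
    [M.HasOrthogonalProjection] [(L ⊓ M).HasOrthogonalProjection]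
    [FiniteDimensional ℝ ↥((L ⊓ M)ᗮ ⊓ L)]
    (hL : L.map (J : H →ₗ[ℝ] H) = Lᗮ) (hM : M.map (J : H →ₗ[ℝ] H) = Mᗮ) :
    ∃ (n : ℕ) (e f : Fin n → H), Orthonormal ℝ (jFrame J e) ∧ Orthonormal ℝ (jFrame J f) ∧
      span ℝ (range (jFrame J f)) = span ℝ (range (jFrame J e)) ∧
      L.map (frameChange (jFrame J e) (jFrame J f) : H →ₗ[ℝ] H) = M := by
  set ν := L ⊓ M
  have hW : (νᗮ ⊓ L) ⊔ (νᗮ ⊓ L).map (J : H →ₗ[ℝ] H) = (ν ⊔ ν.map (J : H →ₗ[ℝ] H))ᗮ :=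
    sup_map_orthogonal_inf_eq hJorth hL inf_le_left
  have hWM : (νᗮ ⊓ L) ⊔ (νᗮ ⊓ L).map (J : H →ₗ[ℝ] H) =
      (νᗮ ⊓ M) ⊔ (νᗮ ⊓ M).map (J : H →ₗ[ℝ] H) := by
    rw [hW, sup_map_orthogonal_inf_eq hJorth hM inf_le_right]
  have : FiniteDimensional ℝ ↥(νᗮ ⊓ M) :=
    Submodule.finiteDimensional_of_le (hWM.symm ▸ le_sup_left)
  obtain ⟨n, hn⟩ : ∃ n, Module.finrank ℝ ↥(νᗮ ⊓ L) = n := ⟨_, rfl⟩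
  obtain ⟨e, he, he_span⟩ := exists_orthonormal_span_eq _ hn
  obtain ⟨f, hf, hf_span⟩ := exists_orthonormal_span_eq _
    ((finrank_eq_of_sup_map_eq hJ hL hM inf_le_right inf_le_right hWM).trans hn)
  have hE := orthonormal_jFrame hJorth hL he (he_span.trans_le inf_le_right)
  refine ⟨n, e, f, hE, orthonormal_jFrame hJorth hM hf (hf_span.trans_le inf_le_right),
    by rw [span_range_jFrame, span_range_jFrame, he_span, hf_span, hWM], ?_⟩
  have hν : ν ≤ (span ℝ (range (jFrame J e)))ᗮ := by
    rw [span_range_jFrame, he_span, hW]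
    exact le_sup_left.trans (le_orthogonal_orthogonal _)
  calc L.map _ = (ν ⊔ νᗮ ⊓ L).map (frameChange (jFrame J e) (jFrame J f) : H →ₗ[ℝ] H) := by
        rw [sup_orthogonal_inf_of_hasOrthogonalProjection inf_le_left]
    _ = ν ⊔ νᗮ ⊓ M := by
        rw [Submodule.map_sup, map_frameChange_of_le_orthogonal hν, ← he_span, ← hf_span]
        exact congrArg (ν ⊔ ·) (map_frameChange_span_range_comp hE Sum.inl)
    _ = M := sup_orthogonal_inf_of_hasOrthogonalProjection inf_le_right

end ComplexStructure

end

/-- If two Lagrangian subspaces almost coincide (`λ / (λ ∩ μ)` is finite-dimensional), they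
are related by a unitary operator of the form `Id + finite rank`. -/
theorem almost_coincident_lagrangians_unitarily_related
    {H : Type*} [NormedAddCommGroup H] [InnerProductSpace ℝ H] [CompleteSpace H]
    (J : H →L[ℝ] H) (hJ2 : ∀ x : H, J (J x) = -x)
    (hJorth : ∀ x y : H, ⟪J x, J y⟫ = ⟪x, y⟫)
    (lam μ : Submodule ℝ H)
    (hlam : omegaAnn J (lam : Set H) = (lam : Set H))
    (hμ : omegaAnn J (μ : Set H) = (μ : Set H))
    (hfin : FiniteDimensional ℝ (↥lam ⧸ (μ.comap lam.subtype))) :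
    ∃ U : H →L[ℝ] H, Function.Bijective ⇑U ∧
      (∀ x y : H, ⟪U x, U y⟫ = ⟪x, y⟫) ∧
      (∀ x : H, U (J x) = J (U x)) ∧
      FiniteDimensional ℝ ↥(LinearMap.range ((U - (1 : H →L[ℝ] H) : H →L[ℝ] H) : H →ₗ[ℝ] H)) ∧
      lam.map (U : H →ₗ[ℝ] H) = μ := by
  have hJ : Function.Injective J := fun x y h => by simpa [hJ2] using congrArg J h
  have hlamc := isClosed_of_omegaAnn_eq hlam
  have hμc := isClosed_of_omegaAnn_eq hμ
  have := hlamc.completeSpace_coe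
  have := hμc.completeSpace_coe
  have : CompleteSpace ↥(lam ⊓ μ) := (hlamc.inter hμc).completeSpace_coe
  have : FiniteDimensional ℝ ↥((lam ⊓ μ)ᗮ ⊓ lam) := finiteDimensional_orthogonal_inf
  obtain ⟨n, e, f, hE, hF, hspan, hmap⟩ := exists_frameChange_jFrame_map_eq hJ hJorth
    (map_eq_orthogonal_of_omegaAnn_eq hJ2 hlam) (map_eq_orthogonal_of_omegaAnn_eq hJ2 hμ)
  exact ⟨frameChange (jFrame J e) (jFrame J f), frameChange_bijective hE hF hspan,
    inner_frameChange_frameChange hE hF hspan, frameChange_jFrame_apply hJ2 hJorth e f,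
    finiteDimensional_range_frameChange_sub_one, hmap⟩
end

section
/- Let μ and λ be Lagrangian subspaces of H and set S = (Id − 2P_μ) ∘ (2P_λ − Id) (the Souriau operator). Then ker(S + Id) = (μ ∩ λ) + J(μ ∩ λ), an orthogonal direct sum; in particular dim ker(S + Id) = 2·dim(μ ∩ λ). Moreover, if (μ, λ) is a Fredholm pair, then S + Id is a Fredholm operator. -/
/-!
Since `P` is idempotent, `S + 1 = (1 - 2P) ∘ 2(Q - P)` and `1 - 2P` is an involution, so everything
reduces to `A = Q - P`. Its kernel is `(μ ∩ λ) ⊕ (ker P ∩ ker Q)`, and `ker P = μᗮ = J μ` because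
`μ` is Lagrangian; likewise for `λ`. On `λ` the operator `A` agrees with `1 - P` and on `μ` with
`-(1 - Q)`, so `range A` contains the images of `μ + λ` under `1 - P` and `1 - Q`. When `μ + λ` has
finite codimension these images have finite codimension in `μᗮ` and `λᗮ`, and
`μᗮ + λᗮ = J (μ + λ)` has finite codimension in `H`; hence so does `range A`. Finally, a bounded
operator between Banach spaces whose range has finite codimension has closed range, by the open
mapping theorem.
-/

open scoped RealInnerProductSpace

open Submodule LinearMap

theorem Submodule.CoFG.map_equiv {R M N : Type*} [Ring R] [AddCommGroup M] [Module R M]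
    [AddCommGroup N] [Module R N] {p : Submodule R M} (hp : p.CoFG) (e : M ≃ₗ[R] N) :
    (p.map (e : M →ₗ[R] N)).CoFG :=
  Module.Finite.equiv (Quotient.equiv p _ e rfl)

theorem Submodule.CoFG.of_sup_fg {K V : Type*} [DivisionRing K] [AddCommGroup V] [Module K V]
    {X G : Submodule K V} (h : (X ⊔ G).CoFG) (hG : G.FG) : X.CoFG := by
  obtain ⟨T, hT⟩ := (X ⊔ G).exists_isCompl
  refine (hG.sup (h.fg_of_isCompl hT)).cofg_of_codisjoint ?_
  rw [codisjoint_iff, ← hT.sup_eq_top]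
  ac_rfl

theorem Submodule.rank_sup_map_eq_two_mul {K V : Type*} [DivisionRing K] [AddCommGroup V]
    [Module K V] {f : V →ₗ[K] V} (hf : Function.Injective f) {p : Submodule K V}
    (hp : p ⊓ p.map f = ⊥) : Module.rank K ↥(p ⊔ p.map f) = 2 * Module.rank K p := by
  have h := rank_sup_add_rank_inf_eq p (p.map f)
  rwa [hp, rank_bot, add_zero, rank_map_eq hf, ← two_mul] at h

theorem ContinuousLinearMap.isClosed_range_of_cofg {𝕜 E F : Type*} [NontriviallyNormedField 𝕜]
    [CompleteSpace 𝕜] [NormedAddCommGroup E] [NormedSpace 𝕜 E] [CompleteSpace E]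
    [NormedAddCommGroup F] [NormedSpace 𝕜 F] [CompleteSpace F] {f : E →L[𝕜] F}
    (hf : (LinearMap.range (f : E →ₗ[𝕜] F)).CoFG) :
    IsClosed ((LinearMap.range (f : E →ₗ[𝕜] F) : Submodule 𝕜 F) : Set F) := by
  obtain ⟨G, hG⟩ := (LinearMap.range (f : E →ₗ[𝕜] F)).exists_isCompl
  have : FiniteDimensional 𝕜 G := .of_fg (hf.fg_of_isCompl hG)
  have : CompleteSpace G := FiniteDimensional.complete 𝕜 G
  set g : E × G →L[𝕜] F := f.coprod G.subtypeL
  have hg : Function.Surjective g := fun z => by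
    obtain ⟨_, ⟨x, rfl⟩, y, hy, rfl⟩ := mem_sup.mp (hG.sup_eq_top ▸ mem_top : z ∈ _)
    exact ⟨(x, ⟨y, hy⟩), rfl⟩
  -- `g` is a quotient map by the open mapping theorem, and `range f` pulls back to `E × {0}`.
  have hpre : g ⁻¹' (LinearMap.range (f : E →ₗ[𝕜] F) : Set F) = Prod.snd ⁻¹' {0} := by
    ext ⟨x, y⟩
    have hfx : f x ∈ LinearMap.range (f : E →ₗ[𝕜] F) := ⟨x, rfl⟩
    simp only [Set.mem_preimage, SetLike.mem_coe, Set.mem_singleton_iff, g,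
      ContinuousLinearMap.coprod_apply, coe_subtypeL, Submodule.coe_subtype,
      add_mem_cancel_left hfx]
    exact ⟨fun hy => Subtype.ext (disjoint_def.mp hG.disjoint _ hy y.2), fun hy => hy ▸ zero_mem _⟩
  rw [← (g.isQuotientMap hg).isClosed_preimage, hpre]
  exact isClosed_singleton.preimage continuous_snd

namespace LinearMap

section Ring

variable {R M : Type*} [Ring R] [AddCommGroup M] [Module R M] {P Q : M →ₗ[R] M}

theorem ker_sub_of_isIdempotentElem (hP : IsIdempotentElem P) (hQ : IsIdempotentElem Q) :
    ker (Q - P) = (range P ⊓ range Q) ⊔ (ker P ⊓ ker Q) := by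
  apply le_antisymm
  · intro x hx
    have hQP : Q x = P x := sub_eq_zero.mp hx
    have hPx : P x ∈ range P ⊓ range Q := ⟨mem_range_self P x, hQP ▸ mem_range_self Q x⟩
    have hQPx : Q (P x) = P x := hQ.mem_range_iff.mp hPx.2
    have hx' : x - P x ∈ ker P ⊓ ker Q := by
      constructor
      · simp [mem_ker, hP.mem_range_iff.mp (mem_range_self P x)]
      · simp [mem_ker, hQPx, hQP]
    simpa using add_mem_sup hPx hx'
  · refine sup_le (fun x ⟨hxP, hxQ⟩ => ?_) (fun x ⟨hxP, hxQ⟩ => ?_)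
    · simp [hP.mem_range_iff.mp hxP, hQ.mem_range_iff.mp hxQ]
    · simp_all [mem_ker]

theorem ker_le_range_sub_sup_map (hP : IsIdempotentElem P) (hQ : IsIdempotentElem Q)
    {F : Submodule R M} (hF : Codisjoint (range P ⊔ range Q) F) :
    ker P ≤ range (Q - P) ⊔ F.map (1 - P) := by
  have hPP : (range P).map (1 - P) = ⊥ := by
    rw [← range_comp, ← Module.End.mul_eq_comp, hP.one_sub_mul_self, range_zero]
  have hPQ : (range Q).map (1 - P) ≤ range (Q - P) := by
    rintro _ ⟨_, ⟨x, rfl⟩, rfl⟩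
    exact ⟨Q x, by simp [hQ.mem_range_iff.mp (mem_range_self Q x)]⟩
  calc ker P = (range P ⊔ range Q ⊔ F).map (1 - P) := by
        rw [hF.eq_top, Submodule.map_top, hP.ker_eq_range_one_sub]
    _ ≤ range (Q - P) ⊔ F.map (1 - P) := by
        rw [Submodule.map_sup, Submodule.map_sup, hPP, bot_sup_eq]
        exact sup_le_sup_right hPQ _

end Ring

variable {K M : Type*} [Field K] [AddCommGroup M] [Module K M] {P Q : M →ₗ[K] M}

theorem cofg_range_sub_of_isIdempotentElem (hP : IsIdempotentElem P) (hQ : IsIdempotentElem Q)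
    (hrange : (range P ⊔ range Q).CoFG) (hker : (ker P ⊔ ker Q).CoFG) :
    (range (Q - P)).CoFG := by
  obtain ⟨F, hF⟩ := (range P ⊔ range Q).exists_isCompl
  have hFfg : F.FG := hrange.fg_of_isCompl hF
  have hkerP := ker_le_range_sub_sup_map hP hQ hF.codisjoint
  have hkerQ : ker Q ≤ range (Q - P) ⊔ F.map (1 - Q) := by
    rw [← neg_sub, range_neg]
    exact ker_le_range_sub_sup_map hQ hP (sup_comm (range P) (range Q) ▸ hF.codisjoint)
  refine CoFG.of_sup_fg (hker.of_le ?_) ((hFfg.map (1 - P)).sup (hFfg.map (1 - Q)))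
  rw [sup_sup_distrib_left]
  exact sup_le_sup hkerP hkerQ

end LinearMap

namespace IsIdempotentElem

variable {K M : Type*} [Field K] [AddCommGroup M] [Module K M] {P Q : M →ₗ[K] M}

theorem involutive_one_sub_two_smul (hP : IsIdempotentElem P) :
    Function.Involutive (1 - (2 : K) • P : M →ₗ[K] M) := fun x => by
  have hPx : P (P x) = P x := hP.mem_range_iff.mp (LinearMap.mem_range_self P x)
  simp only [LinearMap.sub_apply, LinearMap.smul_apply, Module.End.one_apply, map_sub, map_smul,
    hPx]
  module

def reflection (hP : IsIdempotentElem P) : M ≃ₗ[K] M :=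
  LinearEquiv.ofInvolutive (1 - (2 : K) • P) hP.involutive_one_sub_two_smul

theorem one_sub_two_smul_comp_add_one (hP : IsIdempotentElem P) :
    (1 - (2 : K) • P) ∘ₗ ((2 : K) • Q - 1) + 1 =
      (hP.reflection : M →ₗ[K] M) ∘ₗ ((2 : K) • (Q - P)) := by
  ext x
  have hPx : P (P x) = P x := hP.mem_range_iff.mp (LinearMap.mem_range_self P x)
  simp [reflection, hPx]
  module

end IsIdempotentElem

section Lagrangian

variable {H : Type*} [NormedAddCommGroup H] [InnerProductSpace ℝ H] {J : H →L[ℝ] H}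

theorem orthogonal_eq_map_of_omegaAnn_eq (hJ2 : ∀ x, J (J x) = -x) {μ : Submodule ℝ H}
    (hμ : omegaAnn J μ = μ) : μᗮ = μ.map (J : H →ₗ[ℝ] H) := by
  ext z
  -- `z = J (-J z)`, and `-J z ∈ omegaAnn J μ` says exactly that `z ⊥ μ`.
  have hz : z ∈ μᗮ ↔ -J z ∈ omegaAnn J μ := by
    simp [omegaAnn, mem_orthogonal', hJ2]
  rw [hz, hμ, SetLike.mem_coe]
  exact ⟨fun h => ⟨-J z, h, by simp [hJ2]⟩, by rintro ⟨w, hw, rfl⟩; simpa [hJ2] using hw⟩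

end Lagrangian

theorem souriau_operator_kernel_and_fredholm_general
    {H : Type*} [NormedAddCommGroup H] [InnerProductSpace ℝ H] [CompleteSpace H]
    (J : H →L[ℝ] H) (hJ2 : ∀ x : H, J (J x) = -x)
    (μ lam : Submodule ℝ H)
    (hμ : omegaAnn J (μ : Set H) = (μ : Set H))
    (hlam : omegaAnn J (lam : Set H) = (lam : Set H))
    (P Q : H →L[ℝ] H)
    (hPsa : ∀ x y : H, ⟪P x, y⟫ = ⟪x, P y⟫) (hPidem : P.comp P = P)
    (hPrange : LinearMap.range (P : H →ₗ[ℝ] H) = μ)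
    (hQsa : ∀ x y : H, ⟪Q x, y⟫ = ⟪x, Q y⟫) (hQidem : Q.comp Q = Q)
    (hQrange : LinearMap.range (Q : H →ₗ[ℝ] H) = lam)
    (S : H →L[ℝ] H)
    (hS : S = ((1 : H →L[ℝ] H) - (2 : ℝ) • P).comp ((2 : ℝ) • Q - 1)) :
    LinearMap.ker ((S + 1 : H →L[ℝ] H) : H →ₗ[ℝ] H) = (μ ⊓ lam) ⊔ (μ ⊓ lam).map (J : H →ₗ[ℝ] H) ∧
    (∀ u ∈ μ ⊓ lam, ∀ v ∈ μ ⊓ lam, ⟪u, J v⟫ = 0) ∧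
    Module.rank ℝ ↥(LinearMap.ker ((S + 1 : H →L[ℝ] H) : H →ₗ[ℝ] H)) = 2 * Module.rank ℝ ↥(μ ⊓ lam) ∧
    (IsFredholmPair μ lam →
      FiniteDimensional ℝ ↥(LinearMap.ker ((S + 1 : H →L[ℝ] H) : H →ₗ[ℝ] H)) ∧
      IsClosed ((LinearMap.range ((S + 1 : H →L[ℝ] H) : H →ₗ[ℝ] H) : Submodule ℝ H) : Set H) ∧
      FiniteDimensional ℝ (H ⧸ LinearMap.range ((S + 1 : H →L[ℝ] H) : H →ₗ[ℝ] H))) := by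
  have hP : IsIdempotentElem (P : H →ₗ[ℝ] H) := congrArg ContinuousLinearMap.toLinearMap hPidem
  have hQ : IsIdempotentElem (Q : H →ₗ[ℝ] H) := congrArg ContinuousLinearMap.toLinearMap hQidem
  let Jₑ : H ≃ₗ[ℝ] H := .ofLinearMap J (-J) (by ext; simp [hJ2]) (by ext; simp [hJ2])
  have hJinj : Function.Injective (J : H →ₗ[ℝ] H) := Jₑ.injective
  have hμorth := orthogonal_eq_map_of_omegaAnn_eq hJ2 hμ
  have hkerP : ker (P : H →ₗ[ℝ] H) = μ.map (J : H →ₗ[ℝ] H) := by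
    rw [← hμorth, ← hPrange, IsSymmetric.orthogonal_range hPsa]
  have hkerQ : ker (Q : H →ₗ[ℝ] H) = lam.map (J : H →ₗ[ℝ] H) := by
    rw [← orthogonal_eq_map_of_omegaAnn_eq hJ2 hlam, ← hQrange, IsSymmetric.orthogonal_range hQsa]
  have hS1 : ((S + 1 : H →L[ℝ] H) : H →ₗ[ℝ] H) =
      (hP.reflection : H →ₗ[ℝ] H) ∘ₗ ((2 : ℝ) • ((Q : H →ₗ[ℝ] H) - (P : H →ₗ[ℝ] H))) := by
    rw [← hP.one_sub_two_smul_comp_add_one, hS]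
    rfl
  have hker : ker ((S + 1 : H →L[ℝ] H) : H →ₗ[ℝ] H) =
      (μ ⊓ lam) ⊔ (μ ⊓ lam).map (J : H →ₗ[ℝ] H) := by
    rw [hS1, LinearEquiv.ker_comp, ker_smul _ _ (two_ne_zero : (2 : ℝ) ≠ 0),
      ker_sub_of_isIdempotentElem hP hQ, hkerP, hkerQ, hPrange, hQrange, Submodule.map_inf _ hJinj]
  refine ⟨hker, fun u hu v hv => ?_, ?_, fun hFP => ?_⟩
  · rw [real_inner_comm]
    exact (hμ.symm ▸ hv.1 : v ∈ omegaAnn J μ) u hu.1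
  · rw [hker, Submodule.rank_sup_map_eq_two_mul hJinj]
    refine eq_bot_iff.mpr ((inf_le_inf inf_le_left (map_mono inf_le_left)).trans ?_)
    rw [← hμorth, inf_orthogonal_eq_bot]
  · obtain ⟨hfin, -, hcofg⟩ := hFP
    have hcoker : (range ((S + 1 : H →L[ℝ] H) : H →ₗ[ℝ] H)).CoFG := by
      rw [hS1, range_comp, range_smul _ _ (two_ne_zero : (2 : ℝ) ≠ 0)]
      refine (cofg_range_sub_of_isIdempotentElem hP hQ ?_ ?_).map_equiv _
      · rwa [hPrange, hQrange]
      · rw [hkerP, hkerQ, ← Submodule.map_sup]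
        exact Submodule.CoFG.map_equiv hcofg Jₑ
    rw [hker]
    exact ⟨inferInstance, ContinuousLinearMap.isClosed_range_of_cofg hcoker, hcoker⟩

/-- For the Souriau operator `S = (Id − 2 P_μ)(2 P_λ − Id)`:
`ker (S + Id) = (μ ∩ λ) + J(μ ∩ λ)` (an orthogonal sum, of dimension `2 dim (μ ∩ λ)`), and
if `(μ, λ)` is a Fredholm pair then `S + Id` is a Fredholm operator. -/
theorem souriau_operator_kernel_and_fredholm
    {H : Type*} [NormedAddCommGroup H] [InnerProductSpace ℝ H] [CompleteSpace H]
    (J : H →L[ℝ] H) (hJ2 : ∀ x : H, J (J x) = -x)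
    (hJorth : ∀ x y : H, ⟪J x, J y⟫ = ⟪x, y⟫)
    (μ lam : Submodule ℝ H)
    (hμ : omegaAnn J (μ : Set H) = (μ : Set H))
    (hlam : omegaAnn J (lam : Set H) = (lam : Set H))
    (P Q : H →L[ℝ] H)
    (hPsa : ∀ x y : H, ⟪P x, y⟫ = ⟪x, P y⟫) (hPidem : P.comp P = P)
    (hPrange : LinearMap.range (P : H →ₗ[ℝ] H) = μ)
    (hQsa : ∀ x y : H, ⟪Q x, y⟫ = ⟪x, Q y⟫) (hQidem : Q.comp Q = Q)
    (hQrange : LinearMap.range (Q : H →ₗ[ℝ] H) = lam)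
    (S : H →L[ℝ] H)
    (hS : S = ((1 : H →L[ℝ] H) - (2 : ℝ) • P).comp ((2 : ℝ) • Q - 1)) :
    LinearMap.ker ((S + 1 : H →L[ℝ] H) : H →ₗ[ℝ] H) = (μ ⊓ lam) ⊔ (μ ⊓ lam).map (J : H →ₗ[ℝ] H) ∧
    (∀ u ∈ μ ⊓ lam, ∀ v ∈ μ ⊓ lam, ⟪u, J v⟫ = 0) ∧
    Module.rank ℝ ↥(LinearMap.ker ((S + 1 : H →L[ℝ] H) : H →ₗ[ℝ] H)) = 2 * Module.rank ℝ ↥(μ ⊓ lam) ∧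
    (IsFredholmPair μ lam →
      FiniteDimensional ℝ ↥(LinearMap.ker ((S + 1 : H →L[ℝ] H) : H →ₗ[ℝ] H)) ∧
      IsClosed ((LinearMap.range ((S + 1 : H →L[ℝ] H) : H →ₗ[ℝ] H) : Submodule ℝ H) : Set H) ∧
      FiniteDimensional ℝ (H ⧸ LinearMap.range ((S + 1 : H →L[ℝ] H) : H →ₗ[ℝ] H))) :=
  souriau_operator_kernel_and_fredholm_general J hJ2 μ lam hμ hlam P Q hPsa hPidem hPrange hQsa
    hQidem hQrange S hS
end

section
/- Let K be a complex Hilbert space and let d : [0,1] → B(K) be a norm-continuous path such that each d(t) is unitary and d(t) + Id is a Fredholm operator. Then there exist a partition 0 = t₀ < t₁ < ⋯ < t_N = 1 and real numbers ε_j with 0 < ε_j < π (j = 1, …, N) such that for every j and every t ∈ [t_{j−1}, t_j]: both e^{i(π+ε_j)} and e^{i(π−ε_j)} lie in the resolvent set of d(t), and the subspace spanned by the union over θ ∈ [−ε_j, ε_j] of the kernels ker(d(t) − e^{i(π+θ)} Id) is finite-dimensional. -/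
/-!
Fix `t`, write `D = d t` and `M = ker (D + 1)`. The operator `D + 1` is normal with closed range,
so it maps `Mᗮ` into itself and is bounded below there by some `c > 0`; hence `λ - D` is
invertible whenever `0 < ‖λ + 1‖ < c`. This puts `e^{i(π ± ε)}` in the resolvent set of `D` for
small `ε`, and, the invertible operators being open, in that of `d s` for `s` near `t`. For such
`s`, eigenspaces of the isometry `d s` are mutually orthogonal, so every `x` in the span of those
with eigenvalue within `ε` of `-1` satisfies `‖(d s + 1) x‖ ≤ ε ‖x‖`. Comparing with the lower
bound on `Mᗮ` shows that this span meets `Mᗮ` only in `0`, so it injects into the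
finite-dimensional `M`. A Lebesgue number of the resulting cover of `[0, 1]` gives the partition.
-/

open scoped ComplexInnerProductSpace InnerProductSpace Topology
open Module.End Set

section InnerProductSpace

variable {𝕜 K : Type*} [RCLike 𝕜] [NormedAddCommGroup K] [InnerProductSpace 𝕜 K]

theorem orthogonalFamily_eigenspaces_of_inner_map_map {U : K →ₗ[𝕜] K}
    (hU : ∀ x y, ⟪U x, U y⟫_𝕜 = ⟪x, y⟫_𝕜) :
    OrthogonalFamily 𝕜 (fun a => eigenspace U a) fun a => (eigenspace U a).subtypeₗᵢ := by
  rintro a b hab ⟨v, hv⟩ ⟨w, hw⟩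
  rw [mem_eigenspace_iff] at hv hw
  change ⟪v, w⟫_𝕜 = 0
  rcases eq_or_ne v 0 with rfl | hv0
  · exact inner_zero_left w
  have ha : starRingEnd 𝕜 a * a = 1 := by
    have h := hU v v
    rw [hv, inner_smul_left, inner_smul_right, ← mul_assoc] at h
    exact (mul_eq_right₀ (inner_self_ne_zero.2 hv0)).1 h
  have hab' : starRingEnd 𝕜 a * b ≠ 1 := fun h =>
    hab (mul_left_cancel₀ (left_ne_zero_of_mul_eq_one ha) (ha.trans h.symm))
  have h := hU v w
  rw [hv, hw, inner_smul_left, inner_smul_right, ← mul_assoc] at h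
  have h' : (1 - starRingEnd 𝕜 a * b) * ⟪v, w⟫_𝕜 = 0 := by linear_combination -h
  exact (mul_eq_zero.1 h').resolve_left (sub_ne_zero.2 hab'.symm)

theorem norm_apply_add_le_of_mem_iSup_eigenspaces {U : K →ₗ[𝕜] K}
    (hU : ∀ x y, ⟪U x, U y⟫_𝕜 = ⟪x, y⟫_𝕜) {δ : ℝ} (hδ : 0 ≤ δ) {x : K}
    (hx : x ∈ ⨆ a ∈ Metric.closedBall (-1 : 𝕜) δ, eigenspace U a) :
    ‖U x + x‖ ≤ δ * ‖x‖ := by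
  classical
  rw [iSup_subtype', Submodule.mem_iSup_iff_exists_finsupp] at hx
  obtain ⟨f, hf, rfl⟩ := hx
  have hO := (orthogonalFamily_eigenspaces_of_inner_map_map hU).comp
    (Subtype.val_injective (p := (· ∈ Metric.closedBall (-1 : 𝕜) δ)))
  have hUf : U (∑ a ∈ f.support, f a) + ∑ a ∈ f.support, f a =
      ∑ a ∈ f.support, ((a : 𝕜) + 1) • f a := by
    simp only [map_sum, ← Finset.sum_add_distrib]
    refine Finset.sum_congr rfl fun a _ => ?_
    rw [mem_eigenspace_iff.1 (hf a), add_smul, one_smul]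
  rw [Finsupp.sum, hUf]
  refine (pow_le_pow_iff_left₀ (norm_nonneg _) (by positivity) two_ne_zero).1 ?_
  calc ‖∑ a ∈ f.support, ((a : 𝕜) + 1) • f a‖ ^ 2
      = ∑ a ∈ f.support, ‖((a : 𝕜) + 1) • f a‖ ^ 2 :=
        hO.norm_sum (fun a => ⟨((a : 𝕜) + 1) • f a, Submodule.smul_mem _ _ (hf a)⟩) _
    _ ≤ ∑ a ∈ f.support, δ ^ 2 * ‖f a‖ ^ 2 := by
        refine Finset.sum_le_sum fun a _ => ?_
        rw [norm_smul, mul_pow]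
        gcongr
        simpa [dist_eq_norm] using Metric.mem_closedBall.1 a.2
    _ = (δ * ‖∑ a ∈ f.support, f a‖) ^ 2 := by
        rw [mul_pow, ← Finset.mul_sum]
        exact congrArg _ (hO.norm_sum (fun a => ⟨f a, hf a⟩) _).symm

theorem ContinuousLinearMap.ker_sub_smul_one_eq_eigenspace (A : K →L[𝕜] K) (a : 𝕜) :
    LinearMap.ker ((A - a • 1 : K →L[𝕜] K) : K →ₗ[𝕜] K) = eigenspace (A : K →ₗ[𝕜] K) a := by
  ext x
  simp [sub_eq_zero]

theorem mul_norm_add_le_norm_add_of_inner_eq_zero {m : ℝ} (hm : 0 ≤ m) {u y u' y' : K}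
    (h : ⟪u, y⟫_𝕜 = 0) (h' : ⟪u', y'⟫_𝕜 = 0) (hu : m * ‖u‖ ≤ ‖u'‖) (hy : m * ‖y‖ ≤ ‖y'‖) :
    m * ‖u + y‖ ≤ ‖u' + y'‖ := by
  have hsq := norm_add_sq_eq_norm_sq_add_norm_sq_of_inner_eq_zero u y h
  have hsq' := norm_add_sq_eq_norm_sq_add_norm_sq_of_inner_eq_zero u' y' h'
  refine (pow_le_pow_iff_left₀ (by positivity) (norm_nonneg _) two_ne_zero).1 ?_
  rw [mul_pow, sq, sq, sq, hsq, hsq']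
  nlinarith [mul_le_mul hu hu (by positivity) (norm_nonneg _),
    mul_le_mul hy hy (by positivity) (norm_nonneg _)]

theorem Submodule.finiteDimensional_of_disjoint_orthogonal {M W : Submodule 𝕜 K}
    [FiniteDimensional 𝕜 M] (h : Disjoint W Mᗮ) : FiniteDimensional 𝕜 W := by
  refine Module.Finite.of_injective
    ((M.orthogonalProjectionOnto : K →ₗ[𝕜] M) ∘ₗ W.subtype) fun x y hxy => ?_
  have hx : (x - y : K) ∈ Mᗮ := by
    rw [← Submodule.orthogonalProjectionOnto_eq_zero_iff]
    simpa [sub_eq_zero] using hxy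
  exact Subtype.ext (sub_eq_zero.1 ((Submodule.disjoint_def.1 h) _ (W.sub_mem x.2 y.2) hx))

theorem finiteDimensional_iSup_eigenspaces_of_norm_sub_add_lt {D E : K →L[𝕜] K}
    [FiniteDimensional 𝕜 (D + 1).ker] {c δ : ℝ}
    (hc : ∀ y ∈ (D + 1).kerᗮ, c * ‖y‖ ≤ ‖(D + 1) y‖) (hE : ∀ x y, ⟪E x, E y⟫_𝕜 = ⟪x, y⟫_𝕜)
    (hδ : 0 ≤ δ) (hδc : ‖E - D‖ + δ < c) :
    FiniteDimensional 𝕜 ↥(⨆ a ∈ Metric.closedBall (-1 : 𝕜) δ, eigenspace (E : K →ₗ[𝕜] K) a) := by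
  refine Submodule.finiteDimensional_of_disjoint_orthogonal (M := (D + 1).ker)
    (Submodule.disjoint_def.2 fun x hxW hxM => norm_eq_zero.1 ?_)
  have hle : ‖(D + 1) x‖ ≤ δ * ‖x‖ + ‖E - D‖ * ‖x‖ :=
    calc ‖(D + 1) x‖ = ‖(E x + x) - (E - D) x‖ := by congr 1; simp; abel
      _ ≤ ‖E x + x‖ + ‖(E - D) x‖ := norm_sub_le _ _
      _ ≤ δ * ‖x‖ + ‖E - D‖ * ‖x‖ :=
        add_le_add (norm_apply_add_le_of_mem_iSup_eigenspaces hE hδ hxW) ((E - D).le_opNorm x)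
  nlinarith [hc x hxM, norm_nonneg x]

variable [CompleteSpace K]

theorem ContinuousLinearMap.mem_unitary_of_inner_map_map {U : K →L[𝕜] K}
    (hU : ∀ x y, ⟪U x, U y⟫_𝕜 = ⟪x, y⟫_𝕜) (hsurj : Function.Surjective U) :
    U ∈ unitary (K →L[𝕜] K) :=
  (Unitary.linearIsometryEquiv.symm
    (.ofSurjective ((U : K →ₗ[𝕜] K).isometryOfInner hU) hsurj)).2

theorem ContinuousLinearMap.isUnit_of_forall_mul_norm_le {T : K →L[𝕜] K} [IsStarNormal T]
    {c : ℝ} (hc : 0 < c) (h : ∀ x, c * ‖x‖ ≤ ‖T x‖) : IsUnit T := by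
  obtain ⟨C, hC⟩ := antilipschitzWith_iff_exists_mul_le_norm.2 ⟨c, hc, h⟩
  rw [isUnit_iff_bijective, bijective_iff_dense_range_and_antilipschitz,
    Submodule.topologicalClosure_eq_top_iff,
    ContinuousLinearMap.IsStarNormal.orthogonal_range ‹_›, LinearMap.ker_eq_bot]
  exact ⟨hC.injective, C, hC⟩

theorem ContinuousLinearMap.exists_pos_mul_norm_le_of_isClosed_range (T : K →L[𝕜] K)
    (h : IsClosed (T.range : Set K)) : ∃ c > 0, ∀ y ∈ T.kerᗮ, c * ‖y‖ ≤ ‖T y‖ := by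
  set f := T ∘L T.kerᗮ.subtypeL
  have hinj : Function.Injective f := by
    refine (injective_iff_map_eq_zero f).2 fun y hy => Subtype.ext ?_
    exact Submodule.disjoint_def.1 (Submodule.orthogonal_disjoint T.ker) _ hy y.2
  have hrange : Set.range f = T.range := by
    refine Subset.antisymm (Set.range_subset_iff.2 fun y => ⟨y, rfl⟩) ?_
    rintro _ ⟨x, rfl⟩
    refine ⟨⟨_, T.ker.sub_starProjection_mem_orthogonal x⟩, ?_⟩
    have hP : T (T.ker.starProjection x) = 0 := T.ker.starProjection_apply_mem x
    simp [f, hP]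
  obtain ⟨c, hc, hcf⟩ := antilipschitzWith_iff_exists_mul_le_norm.1
    (f.antilipschitz_of_injective_of_isClosed_range hinj (hrange ▸ h))
  exact ⟨c, hc, fun y hy => hcf ⟨y, hy⟩⟩

theorem ContinuousLinearMap.mul_norm_le_norm_algebraMap_sub_apply {T : K →L[𝕜] K}
    [IsStarNormal T] {c : ℝ} (hc : ∀ y ∈ T.kerᗮ, c * ‖y‖ ≤ ‖T y‖) {μ : 𝕜} (hμc : ‖μ‖ ≤ c)
    (x : K) : min ‖μ‖ (c - ‖μ‖) * ‖x‖ ≤ ‖(algebraMap 𝕜 (K →L[𝕜] K) μ - T) x‖ := by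
  set B := algebraMap 𝕜 (K →L[𝕜] K) μ - T
  set u := T.ker.starProjection x
  set y := x - u
  have hu : u ∈ T.ker := T.ker.starProjection_apply_mem x
  have hTu : T u = 0 := hu
  have hy : y ∈ T.kerᗮ := T.ker.sub_starProjection_mem_orthogonal x
  have hTy : T y ∈ T.kerᗮ := by
    rw [← ContinuousLinearMap.IsStarNormal.orthogonal_range ‹_›]
    exact Submodule.le_orthogonal_orthogonal _ (LinearMap.mem_range_self _ y)
  have hBu : B u = μ • u := by
    simp [B, Algebra.algebraMap_eq_smul_one, hTu]
  have hBy : B y = μ • y - T y := by simp [B, Algebra.algebraMap_eq_smul_one]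
  have hbound := mul_norm_add_le_norm_add_of_inner_eq_zero (𝕜 := 𝕜)
    (le_min (norm_nonneg μ) (sub_nonneg.2 hμc))
    (Submodule.inner_right_of_mem_orthogonal hu hy)
    (Submodule.inner_right_of_mem_orthogonal (hBu ▸ T.ker.smul_mem μ hu)
      (hBy ▸ Submodule.sub_mem _ (Submodule.smul_mem _ μ hy) hTy))
    (by rw [hBu, norm_smul]; gcongr; exact min_le_left _ _)
    (calc min ‖μ‖ (c - ‖μ‖) * ‖y‖ ≤ (c - ‖μ‖) * ‖y‖ := by gcongr; exact min_le_right _ _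
      _ ≤ ‖T y‖ - ‖μ • y‖ := by rw [norm_smul]; linarith [hc y hy]
      _ ≤ ‖B y‖ := by rw [hBy, norm_sub_rev]; exact norm_sub_norm_le _ _)
  rwa [← map_add, add_sub_cancel] at hbound

theorem ContinuousLinearMap.isUnit_algebraMap_sub_of_norm_lt {T : K →L[𝕜] K} [IsStarNormal T]
    {c : ℝ} (hc : ∀ y ∈ T.kerᗮ, c * ‖y‖ ≤ ‖T y‖) {μ : 𝕜} (hμ : μ ≠ 0) (hμc : ‖μ‖ < c) :
    IsUnit (algebraMap 𝕜 (K →L[𝕜] K) μ - T) := by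
  have : IsStarNormal (algebraMap 𝕜 (K →L[𝕜] K) μ) :=
    ⟨by rw [← algebraMap_star_comm]; exact Algebra.commute_algebraMap_left _ _⟩
  have := (Algebra.commute_algebraMap_left μ (star T)).isStarNormal_sub
  exact isUnit_of_forall_mul_norm_le (lt_min (norm_pos_iff.2 hμ) (sub_pos.2 hμc))
    (mul_norm_le_norm_algebraMap_sub_apply hc hμc.le)

end InnerProductSpace

theorem eventually_mem_resolventSet {𝕜 A : Type*} [NormedField 𝕜] [NormedRing A]
    [NormedAlgebra 𝕜 A] [HasSummableGeomSeries A] {a : A} {z : 𝕜} (h : z ∈ resolventSet 𝕜 a) :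
    ∀ᶠ b in 𝓝 a, z ∈ resolventSet 𝕜 b :=
  ((continuous_const.sub continuous_id).tendsto a).eventually (Units.isOpen.mem_nhds h)

open Complex Real in
theorem norm_exp_pi_add_mul_I_add_one (θ : ℝ) :
    ‖exp ((π + θ) * I) + 1‖ = ‖exp (I * θ) - 1‖ := by
  rw [← norm_neg, add_mul, Complex.exp_add, exp_pi_mul_I, mul_comm I]
  ring_nf

open Complex Real in
theorem norm_exp_pi_add_mul_I_add_one_le (θ : ℝ) : ‖exp ((π + θ) * I) + 1‖ ≤ |θ| :=
  (norm_exp_pi_add_mul_I_add_one θ).trans_le (Real.norm_eq_abs θ ▸ norm_exp_I_mul_ofReal_sub_one_le)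

open Complex Real in
theorem exp_pi_add_mul_I_add_one_ne_zero {θ : ℝ} (h0 : θ ≠ 0) (hθ : |θ| < 2 * π) :
    exp ((π + θ) * I) + 1 ≠ 0 := by
  rw [← norm_ne_zero_iff, norm_exp_pi_add_mul_I_add_one, norm_exp_I_mul_ofReal_sub_one]
  have := abs_lt.1 hθ
  simp [Real.sin_eq_zero_iff_of_lt_of_lt (x := θ / 2) (by linarith) (by linarith), h0]

section SpectralWindow

variable {K : Type*} [NormedAddCommGroup K] [InnerProductSpace ℂ K] [CompleteSpace K]

def IsFiniteSpectralWindow (A : K →L[ℂ] K) (ε : ℝ) : Prop :=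
  Complex.exp ((Real.pi + ε) * Complex.I) ∈ resolventSet ℂ A ∧
    Complex.exp ((Real.pi - ε) * Complex.I) ∈ resolventSet ℂ A ∧
    FiniteDimensional ℂ
      ↥(⨆ θ ∈ Set.Icc (-ε) ε,
          LinearMap.ker ((A - Complex.exp ((Real.pi + θ) * Complex.I) •
            (1 : K →L[ℂ] K) : K →L[ℂ] K) : K →ₗ[ℂ] K))

open Real in
theorem exists_eventually_isFiniteSpectralWindow {D : K →L[ℂ] K}
    (hD : ∀ x y, ⟪D x, D y⟫ = ⟪x, y⟫) (hDsurj : Function.Surjective D)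
    [FiniteDimensional ℂ (D + 1).ker] (hclosed : IsClosed ((D + 1).range : Set K)) :
    ∃ ε ∈ Ioo 0 π, ∀ᶠ E in 𝓝 D,
      (∀ x y, ⟪E x, E y⟫ = ⟪x, y⟫) → IsFiniteSpectralWindow E ε := by
  obtain ⟨c, hc0, hc⟩ := (D + 1).exists_pos_mul_norm_le_of_isClosed_range hclosed
  have := isStarNormal_of_mem_unitary (D.mem_unitary_of_inner_map_map hD hDsurj)
  have : IsStarNormal (D + 1) := by rw [add_comm]; infer_instance
  -- `ε ≤ c / 4` leaves room for perturbations of `D` of norm `< c / 2`.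
  set ε := min (c / 4) 1
  have hε0 : 0 < ε := lt_min (by positivity) one_pos
  have hεc : ε ≤ c / 4 := min_le_left _ _
  have hεπ : ε < π := (min_le_right _ _).trans_lt (by linarith [pi_gt_three])
  have hres : ∀ θ : ℝ, θ ≠ 0 → |θ| ≤ ε →
      Complex.exp ((π + θ) * Complex.I) ∈ resolventSet ℂ D := by
    intro θ h0 hθ
    rw [spectrum.mem_resolventSet_iff]
    convert (D + 1).isUnit_algebraMap_sub_of_norm_lt hc
      (exp_pi_add_mul_I_add_one_ne_zero h0 (by linarith))
      ((norm_exp_pi_add_mul_I_add_one_le θ).trans_lt (by linarith)) using 1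
    simp only [map_add, map_one]
    abel
  refine ⟨ε, ⟨hε0, hεπ⟩, ?_⟩
  filter_upwards [eventually_mem_resolventSet (hres ε hε0.ne' (abs_of_pos hε0).le),
    eventually_mem_resolventSet
      (hres (-ε) (neg_ne_zero.2 hε0.ne') (by rw [abs_neg, abs_of_pos hε0])),
    Metric.ball_mem_nhds D (half_pos hc0)] with E hplus hminus hED hE
  refine ⟨hplus, by simpa [sub_eq_add_neg] using hminus, ?_⟩
  rw [Metric.mem_ball, dist_eq_norm] at hED
  have := finiteDimensional_iSup_eigenspaces_of_norm_sub_add_lt hc hE hε0.le (by linarith)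
  refine Submodule.finiteDimensional_of_le
    (S₂ := ⨆ a ∈ Metric.closedBall (-1 : ℂ) ε, eigenspace (E : K →ₗ[ℂ] K) a)
    (iSup₂_le fun θ hθ => ?_)
  rw [E.ker_sub_smul_one_eq_eigenspace]
  refine le_iSup₂_of_le (f := fun a _ => eigenspace (E : K →ₗ[ℂ] K) a) _ ?_ le_rfl
  rw [Metric.mem_closedBall, dist_eq_norm, sub_neg_eq_add]
  exact (norm_exp_pi_add_mul_I_add_one_le θ).trans (abs_le.2 hθ)

end SpectralWindow

theorem exists_uniform_partition_of_eventually {P : ℝ → ℝ → Prop}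
    (h : ∀ t ∈ Icc (0 : ℝ) 1, ∀ᶠ s in 𝓝[Icc 0 1] t, P t s) :
    ∃ N : ℕ, 0 < N ∧ ∃ τ : ℕ → Icc (0 : ℝ) 1,
      ∀ j < N, ∀ s ∈ Icc ((j : ℝ) / N) ((j + 1 : ℕ) / N), P (τ j) s := by
  obtain ⟨η, hη, hcover⟩ := Metric.uniformity_basis_dist.lebesgue_number_lemma_nhdsWithin'
    (U := fun t _ => {s | P t s}) isCompact_Icc h
  obtain ⟨N, hN⟩ := exists_nat_gt η⁻¹
  have hN0 : (0 : ℝ) < N := (inv_pos.2 hη).trans hN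
  have hpiece : ∀ j, ∃ τ : Icc (0 : ℝ) 1, j < N →
      ∀ s ∈ Icc ((j : ℝ) / N) ((j + 1 : ℕ) / N), P τ s := by
    intro j
    by_cases hj : j < N
    · have hjN : ((j + 1 : ℕ) : ℝ) ≤ N := by exact_mod_cast hj
      have hright : ((j + 1 : ℕ) : ℝ) / N = j / N + (N : ℝ)⁻¹ := by push_cast; ring
      have hNη : (N : ℝ)⁻¹ < η := (inv_lt_comm₀ hN0 hη).2 hN
      obtain ⟨τ, hτ⟩ := hcover (j / N)
        ⟨by positivity, (div_le_one hN0).2 (le_trans (by simp) hjN)⟩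
      refine ⟨τ, fun _ s hs => hτ ⟨?_, ?_, ?_⟩⟩
      · change dist ((j : ℝ) / N) s < η
        rw [Real.dist_eq, abs_sub_lt_iff]
        constructor <;> linarith [hs.1, hs.2]
      · exact (div_nonneg (Nat.cast_nonneg j) hN0.le).trans hs.1
      · exact hs.2.trans ((div_le_one hN0).2 hjN)
    · exact ⟨⟨0, left_mem_Icc.2 zero_le_one⟩, fun h => absurd h hj⟩
  choose τ hτ using hpiece
  exact ⟨N, Nat.cast_pos.1 hN0, τ, hτ⟩

/-- Along a norm-continuous path of unitaries `d(t)` with `d(t) + Id` Fredholm, there is a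
partition `0 = t₀ < ⋯ < t_N = 1` and numbers `0 < ε_j < π` such that on each subinterval
`[t_{j-1}, t_j]`, the points `e^{i(π ± ε_j)}` lie in the resolvent set of `d(t)` and the
span of the eigenspaces for eigenvalues `e^{i(π + θ)}`, `|θ| ≤ ε_j`, is finite-dimensional. -/
theorem exists_partition_and_spectral_gaps
    {K : Type*} [NormedAddCommGroup K] [InnerProductSpace ℂ K] [CompleteSpace K]
    (d : ℝ → K →L[ℂ] K) (hd : ContinuousOn d (Set.Icc (0 : ℝ) 1))
    (hunit : ∀ t ∈ Set.Icc (0 : ℝ) 1,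
      (∀ x y : K, ⟪d t x, d t y⟫ = ⟪x, y⟫) ∧ Function.Bijective ⇑(d t))
    (hfred : ∀ t ∈ Set.Icc (0 : ℝ) 1,
      FiniteDimensional ℂ ↥(LinearMap.ker ((d t + 1 : K →L[ℂ] K) : K →ₗ[ℂ] K)) ∧
      IsClosed ((LinearMap.range ((d t + 1 : K →L[ℂ] K) : K →ₗ[ℂ] K) : Submodule ℂ K) : Set K) ∧
      FiniteDimensional ℂ (K ⧸ LinearMap.range ((d t + 1 : K →L[ℂ] K) : K →ₗ[ℂ] K))) :
    ∃ (N : ℕ) (t : ℕ → ℝ) (ε : ℕ → ℝ), 0 < N ∧ t 0 = 0 ∧ t N = 1 ∧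
      (∀ j < N, t j < t (j + 1)) ∧
      ∀ j < N, 0 < ε j ∧ ε j < Real.pi ∧
        ∀ s ∈ Set.Icc (t j) (t (j + 1)),
          Complex.exp ((Real.pi + ε j) * Complex.I) ∈ resolventSet ℂ (d s) ∧
          Complex.exp ((Real.pi - ε j) * Complex.I) ∈ resolventSet ℂ (d s) ∧
          FiniteDimensional ℂ
            ↥(⨆ θ ∈ Set.Icc (-(ε j)) (ε j),
                LinearMap.ker ((d s - Complex.exp ((Real.pi + θ) * Complex.I) •
                  (1 : K →L[ℂ] K) : K →L[ℂ] K) : K →ₗ[ℂ] K)) := by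
  have hlocal : ∀ t ∈ Icc (0 : ℝ) 1, ∃ ε ∈ Ioo 0 Real.pi, ∀ᶠ E in 𝓝 (d t),
      (∀ x y, ⟪E x, E y⟫ = ⟪x, y⟫) → IsFiniteSpectralWindow E ε := fun t ht =>
    have := (hfred t ht).1
    exists_eventually_isFiniteSpectralWindow (hunit t ht).1 (hunit t ht).2.2 (hfred t ht).2.1
  choose! ε hε hwindow using hlocal
  obtain ⟨N, hN, τ, hτ⟩ := exists_uniform_partition_of_eventually
    (P := fun t s => IsFiniteSpectralWindow (d s) (ε t)) fun t ht => by
      filter_upwards [(hd t ht).eventually (hwindow t ht), self_mem_nhdsWithin] with s hs hsI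
      exact hs (hunit s hsI).1
  refine ⟨N, fun j => j / N, fun j => ε (τ j), hN, by simp, div_self (by positivity),
    fun j _ => by dsimp only; gcongr; simp,
    fun j hj => ⟨(hε _ (τ j).2).1, (hε _ (τ j).2).2, hτ j hj⟩⟩
end
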